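/- arXiv:1712.06084 — 4 statements merged into one kernel-verified Lean document; each statement's English description precedes it below -/
import Mathlib

section
/- Let d ≥ 1, let H : ℝ^d → ℝ be continuously differentiable, and let B : ℝ^d → Matrix d d ℝ be continuous with B(y) skew-symmetric for every y. Let Y be a subspace of the continuous real-valued functions on [0,1]. Suppose u : [0,1] → ℝ^d is continuously differentiable with every component of its derivative u' belonging to Y, and g : [0,1] → ℝ^d is continuous such that (i) for every v ∈ Y and every coordinate i, ∫₀¹ v(τ) g_i(τ) dτ = ∫₀¹ v(τ) (∇H(u(τ)))_i dτ, and (ii) u'(τ) = B(u(τ)) · g(τ) for all τ ∈ [0,1]. Then H(u(1)) = H(u(0)). -/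
open Matrix Set
open scoped RealInnerProductSpace

/-!
Along `u`, `H(u(1)) - H(u(0)) = ∫₀¹ ⟪∇H(u), u'⟫`. Since every component of `u'` lies in `Y`,
the projection property lets us replace `∇H(u)` by `g` in this integral, and
`⟪u', g⟫ = ⟪B(u) g, g⟫ = 0` pointwise by skew-symmetry.
-/

theorem ContDiff.continuous_gradient {E : Type*} [NormedAddCommGroup E] [InnerProductSpace ℝ E]
    [CompleteSpace E] {H : E → ℝ} (hH : ContDiff ℝ 1 H) : Continuous (gradient H) :=
  (InnerProductSpace.toDual ℝ E).symm.continuous.comp (hH.continuous_fderiv one_ne_zero)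

theorem Matrix.mulVec_dotProduct_self_eq_zero_of_transpose_eq_neg {ι R : Type*} [Fintype ι]
    [CommRing R] [NoZeroDivisors R] [CharZero R] {M : Matrix ι ι R} (hM : Mᵀ = -M) (x : ι → R) :
    M *ᵥ x ⬝ᵥ x = 0 := by
  have h : M *ᵥ x ⬝ᵥ x = -(M *ᵥ x ⬝ᵥ x) :=
    calc M *ᵥ x ⬝ᵥ x = x ᵥ* M ⬝ᵥ x := by rw [dotProduct_comm, dotProduct_mulVec]
      _ = -(M *ᵥ x ⬝ᵥ x) := by rw [← mulVec_transpose, hM, neg_mulVec, neg_dotProduct]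
  rwa [eq_neg_iff_add_eq_zero, add_self_eq_zero] at h

theorem EuclideanSpace.inner_eq_zero_of_ofLp_eq_mulVec {ι : Type*} [Fintype ι]
    {M : Matrix ι ι ℝ} (hM : Mᵀ = -M) {x y : EuclideanSpace ℝ ι} (h : x.ofLp = M *ᵥ y.ofLp) :
    ⟪x, y⟫ = 0 := by
  rw [real_inner_comm, EuclideanSpace.inner_eq_star_dotProduct, h, star_trivial]
  exact mulVec_dotProduct_self_eq_zero_of_transpose_eq_neg hM _

theorem EuclideanSpace.integral_inner_eq_sum_integral_mul {ι : Type*} [Fintype ι]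
    {f g : ℝ → EuclideanSpace ℝ ι} {a b : ℝ} (hf : ContinuousOn f (uIcc a b))
    (hg : ContinuousOn g (uIcc a b)) :
    ∫ τ in a..b, ⟪f τ, g τ⟫ = ∑ i, ∫ τ in a..b, f τ i * g τ i := by
  have hcoord {h : ℝ → EuclideanSpace ℝ ι} (hh : ContinuousOn h (uIcc a b)) (i : ι) :
      ContinuousOn (fun τ => h τ i) (uIcc a b) :=
    (PiLp.continuous_apply 2 _ i).comp_continuousOn hh
  simp only [PiLp.inner_apply, RCLike.inner_apply', conj_trivial]
  exact intervalIntegral.integral_finsetSum fun i _ =>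
    ((hcoord hf i).mul (hcoord hg i)).intervalIntegrable

theorem integral_inner_gradient_comp_eq_sub {E : Type*} [NormedAddCommGroup E]
    [InnerProductSpace ℝ E] [CompleteSpace E] {H : E → ℝ} (hH : ContDiff ℝ 1 H)
    {u u' : ℝ → E} {a b : ℝ} (hab : a ≤ b)
    (hu : ∀ τ ∈ Icc a b, HasDerivWithinAt u (u' τ) (Icc a b) τ)
    (hu' : ContinuousOn u' (Icc a b)) :
    ∫ τ in a..b, ⟪gradient H (u τ), u' τ⟫ = H (u b) - H (u a) := by
  have hHu : ∀ τ ∈ Icc a b,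
      HasDerivWithinAt (H ∘ u) ⟪gradient H (u τ), u' τ⟫ (Icc a b) τ := fun τ hτ => by
    simpa [InnerProductSpace.toDual_apply_apply] using
      ((hH.differentiable one_ne_zero) (u τ)).hasGradientAt.hasFDerivAt.comp_hasDerivWithinAt τ
        (hu τ hτ)
  have hu_cont : ContinuousOn u (Icc a b) := fun τ hτ => (hu τ hτ).continuousWithinAt
  refine intervalIntegral.integral_eq_sub_of_hasDerivAt_of_le hab
    (fun τ hτ => (hHu τ hτ).continuousWithinAt)
    (fun τ hτ => (hHu τ (Ioo_subset_Icc_self hτ)).hasDerivAt (Icc_mem_nhds hτ.1 hτ.2)) ?_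
  refine ContinuousOn.intervalIntegrable ?_
  rw [uIcc_of_le hab]
  exact (hH.continuous_gradient.comp_continuousOn hu_cont).inner hu'

theorem ffep_energy_preservation_general
    (d : ℕ)
    (H : EuclideanSpace ℝ (Fin d) → ℝ) (hH : ContDiff ℝ 1 H)
    (B : EuclideanSpace ℝ (Fin d) → Matrix (Fin d) (Fin d) ℝ)
    (hBskew : ∀ y, (B y)ᵀ = -(B y))
    (Y : Submodule ℝ (ℝ → ℝ))
    (u u' : ℝ → EuclideanSpace ℝ (Fin d))
    (hu : ∀ τ ∈ Set.Icc (0:ℝ) 1, HasDerivWithinAt u (u' τ) (Set.Icc (0:ℝ) 1) τ)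
    (hu'cont : ContinuousOn u' (Set.Icc (0:ℝ) 1))
    (hu'Y : ∀ i : Fin d, (fun τ => u' τ i) ∈ Y)
    (g : ℝ → EuclideanSpace ℝ (Fin d))
    (hgcont : ContinuousOn g (Set.Icc (0:ℝ) 1))
    (hproj : ∀ v ∈ Y, ∀ i : Fin d,
      ∫ τ in (0:ℝ)..1, v τ * g τ i = ∫ τ in (0:ℝ)..1, v τ * gradient H (u τ) i)
    (heq : ∀ τ ∈ Set.Icc (0:ℝ) 1,
      u' τ = (B (u τ)).mulVec (fun i => g τ i)) :
    H (u 1) = H (u 0) := by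
  have h01 : uIcc (0:ℝ) 1 = Icc 0 1 := uIcc_of_le zero_le_one
  have hgrad_cont : ContinuousOn (fun τ => gradient H (u τ)) (Icc 0 1) :=
    hH.continuous_gradient.comp_continuousOn fun τ hτ => (hu τ hτ).continuousWithinAt
  have h_skew : ∫ τ in (0:ℝ)..1, ⟪u' τ, g τ⟫ = 0 := by
    rw [intervalIntegral.integral_congr (g := fun _ => 0) fun τ hτ =>
      EuclideanSpace.inner_eq_zero_of_ofLp_eq_mulVec (hBskew (u τ)) (heq τ (h01 ▸ hτ))]
    exact intervalIntegral.integral_zero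
  calc H (u 1) = H (u 0) + ∫ τ in (0:ℝ)..1, ⟪gradient H (u τ), u' τ⟫ := by
        rw [integral_inner_gradient_comp_eq_sub hH zero_le_one hu hu'cont]; ring
    _ = H (u 0) + ∑ i, ∫ τ in (0:ℝ)..1, u' τ i * gradient H (u τ) i := by
        simp_rw [real_inner_comm (u' _)]
        rw [EuclideanSpace.integral_inner_eq_sum_integral_mul (h01 ▸ hu'cont) (h01 ▸ hgrad_cont)]
    _ = H (u 0) + ∫ τ in (0:ℝ)..1, ⟪u' τ, g τ⟫ := by
        rw [EuclideanSpace.integral_inner_eq_sum_integral_mul (h01 ▸ hu'cont) (h01 ▸ hgcont)]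
        simp_rw [hproj _ (hu'Y _)]
    _ = H (u 0) := by rw [h_skew, add_zero]

/-- **Energy preservation of the FFEP integrator (Theorem 2.4).**
If `u' ∈ Y` componentwise, `g` is the componentwise `L²(0,1)`-projection of `∇H ∘ u`
onto `Y`, and `u' = B(u) g` on `[0,1]` with `B` skew-symmetric, then `H(u 1) = H(u 0)`. -/
theorem ffep_energy_preservation
    (d : ℕ) (hd : 1 ≤ d)
    (H : EuclideanSpace ℝ (Fin d) → ℝ) (hH : ContDiff ℝ 1 H)
    (B : EuclideanSpace ℝ (Fin d) → Matrix (Fin d) (Fin d) ℝ)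
    (hBcont : Continuous fun y => (B y : Fin d → Fin d → ℝ))
    (hBskew : ∀ y, (B y)ᵀ = -(B y))
    (Y : Submodule ℝ (ℝ → ℝ))
    (hY : ∀ v ∈ Y, ContinuousOn v (Set.Icc (0:ℝ) 1))
    (u u' : ℝ → EuclideanSpace ℝ (Fin d))
    (hu : ∀ τ ∈ Set.Icc (0:ℝ) 1, HasDerivWithinAt u (u' τ) (Set.Icc (0:ℝ) 1) τ)
    (hu'cont : ContinuousOn u' (Set.Icc (0:ℝ) 1))
    (hu'Y : ∀ i : Fin d, (fun τ => u' τ i) ∈ Y)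
    (g : ℝ → EuclideanSpace ℝ (Fin d))
    (hgcont : ContinuousOn g (Set.Icc (0:ℝ) 1))
    (hproj : ∀ v ∈ Y, ∀ i : Fin d,
      ∫ τ in (0:ℝ)..1, v τ * g τ i = ∫ τ in (0:ℝ)..1, v τ * gradient H (u τ) i)
    (heq : ∀ τ ∈ Set.Icc (0:ℝ) 1,
      u' τ = (B (u τ)).mulVec (fun i => g τ i)) :
    H (u 1) = H (u 0) :=
  ffep_energy_preservation_general d H hH B hBskew Y u u' hu hu'cont hu'Y g hgcont hproj heq
end

section
/- Let d ≥ 1, y₀ ∈ ℝ^d, R > 0, and let K = {y ∈ ℝ^d : ‖y − y₀‖ ≤ R}. Let P : [0,1]×[0,1] → ℝ be continuous with |P(τ,σ)| ≤ A₀ for all τ,σ ∈ [0,1]; let B : ℝ^d → Matrix d d ℝ be continuous with operator norm ‖B(y)‖ ≤ C₀ and ‖B(y) − B(z)‖ ≤ C₁‖y − z‖ for all y, z ∈ K; let G : ℝ^d → ℝ^d be continuous with ‖G(y)‖ ≤ D₀ and ‖G(y) − G(z)‖ ≤ D₁‖y − z‖ for all y, z ∈ K. If h ≥ 0 satisfies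 h·A₀·C₀·D₀ ≤ R and h·A₀·(C₀D₁ + C₁D₀) < 1, then there exists exactly one continuous function u : [0,1] → K satisfying u(τ) = y₀ + h ∫₀^τ B(u(α)) ( ∫₀¹ P(α,σ) G(u(σ)) dσ ) dα for all τ ∈ [0,1]. -/
/-!
The right-hand side of the equation maps continuous paths `[0,1] → closedBall y₀ R` to continuous
paths, and `h A₀ C₀ D₀ ≤ R` keeps them in the ball. Writing
`B(u) I(u) - B(v) I(v) = (B(u) - B(v)) I(u) + B(v) (I(u) - I(v))` for the inner integrals `I`
shows that this map is Lipschitz for the uniform metric with constant `h A₀ (C₀ D₁ + C₁ D₀) < 1`,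
so the Banach fixed-point theorem on this complete space gives existence and uniqueness. The
kernel is first extended from the unit square by clamping, which does not change the equation on
`[0,1]`.
-/

open Set Function intervalIntegral Metric

lemma norm_intervalIntegral_le_of_mem_unitInterval {E : Type*} [NormedAddCommGroup E]
    [NormedSpace ℝ E] {f : ℝ → E} {c τ : ℝ} (hτ : τ ∈ Icc (0:ℝ) 1)
    (hf : ∀ α, ‖f α‖ ≤ c) : ‖∫ α in (0:ℝ)..τ, f α‖ ≤ c := by
  have hc : 0 ≤ c := (norm_nonneg _).trans (hf 0)
  calc ‖∫ α in (0:ℝ)..τ, f α‖ ≤ c * |τ - 0| := norm_integral_le_of_norm_le_const fun α _ => hf α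
    _ ≤ c * 1 := by gcongr; rw [sub_zero, abs_of_nonneg hτ.1]; exact hτ.2
    _ = c := mul_one c

lemma ContinuousLinearMap.norm_apply_sub_apply_le {𝕜 E F : Type*} [NontriviallyNormedField 𝕜]
    [NormedAddCommGroup E] [NormedSpace 𝕜 E] [NormedAddCommGroup F] [NormedSpace 𝕜 F]
    (A B : E →L[𝕜] F) (x y : E) :
    ‖A x - B y‖ ≤ ‖A - B‖ * ‖x‖ + ‖B‖ * ‖x - y‖ :=
  calc ‖A x - B y‖ = ‖(A - B) x + B (x - y)‖ := by
        rw [sub_apply, map_sub, sub_add_sub_cancel]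
    _ ≤ ‖A - B‖ * ‖x‖ + ‖B‖ * ‖x - y‖ :=
        (norm_add_le _ _).trans (add_le_add ((A - B).le_opNorm x) (B.le_opNorm _))

/-- A Lipschitz bound with a negative constant forces `K` to be a subsingleton, so the bound
passes to the uniform distance whatever the sign of `C`. -/
lemma norm_sub_le_mul_dist_of_lipschitz_bound {E F α : Type*} [NormedAddCommGroup E]
    [NormedAddCommGroup F] [TopologicalSpace α] [CompactSpace α]
    {K : Set E} {Φ : E → F} {C : ℝ} (hΦ : ∀ y ∈ K, ∀ z ∈ K, ‖Φ y - Φ z‖ ≤ C * ‖y - z‖)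
    (u v : C(α, K)) (t : α) : ‖Φ (u t) - Φ (v t)‖ ≤ C * dist u v := by
  rcases le_or_gt 0 C with hC | hC
  · calc ‖Φ (u t) - Φ (v t)‖ ≤ C * ‖(u t : E) - v t‖ := hΦ _ (u t).2 _ (v t).2
      _ ≤ C * dist u v := by
          gcongr
          exact (dist_eq_norm (u t : E) (v t)).symm.trans_le
            (ContinuousMap.dist_apply_le_dist (f := u) (g := v) t)
  · obtain rfl : u = v := ContinuousMap.ext fun s => Subtype.ext <| sub_eq_zero.1 <|
      norm_le_zero_iff.1 <|
        nonpos_of_mul_nonneg_right ((norm_nonneg _).trans (hΦ _ (u s).2 _ (v s).2)) hC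
    simp

section Clamping

variable {E : Type*} [TopologicalSpace E] {K : Set E}

noncomputable def clampedPath (u : C(Icc (0:ℝ) 1, K)) : ℝ → E :=
  Subtype.val ∘ IccExtend zero_le_one u

lemma continuous_clampedPath (u : C(Icc (0:ℝ) 1, K)) : Continuous (clampedPath u) :=
  continuous_subtype_val.comp (map_continuous u).Icc_extend'

lemma clampedPath_mem (u : C(Icc (0:ℝ) 1, K)) (s : ℝ) : clampedPath u s ∈ K :=
  (IccExtend zero_le_one u s).2

lemma clampedPath_of_mem (u : C(Icc (0:ℝ) 1, K)) {τ : ℝ} (hτ : τ ∈ Icc (0:ℝ) 1) :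
    clampedPath u τ = u ⟨τ, hτ⟩ := by
  rw [clampedPath, comp_apply, IccExtend_of_mem _ _ hτ]

noncomputable def clampedKernel (P : ℝ → ℝ → ℝ) (α σ : ℝ) : ℝ :=
  P (projIcc 0 1 zero_le_one α) (projIcc 0 1 zero_le_one σ)

lemma continuous_clampedKernel {P : ℝ → ℝ → ℝ}
    (hP : ContinuousOn (uncurry P) (Icc (0:ℝ) 1 ×ˢ Icc (0:ℝ) 1)) :
    Continuous (uncurry (clampedKernel P)) := by
  have hproj : Continuous fun x : ℝ => (projIcc (0:ℝ) 1 zero_le_one x : ℝ) :=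
    continuous_subtype_val.comp continuous_projIcc
  exact hP.comp_continuous ((hproj.comp continuous_fst).prodMk (hproj.comp continuous_snd))
    fun p => ⟨(projIcc (0:ℝ) 1 zero_le_one p.1).2, (projIcc (0:ℝ) 1 zero_le_one p.2).2⟩

lemma clampedKernel_of_mem {P : ℝ → ℝ → ℝ} {α σ : ℝ} (hα : α ∈ Icc (0:ℝ) 1)
    (hσ : σ ∈ Icc (0:ℝ) 1) : clampedKernel P α σ = P α σ := by
  rw [clampedKernel, projIcc_of_mem _ hα, projIcc_of_mem _ hσ]

lemma abs_clampedKernel_le {P : ℝ → ℝ → ℝ} {A : ℝ}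
    (hP : ∀ α ∈ Icc (0:ℝ) 1, ∀ σ ∈ Icc (0:ℝ) 1, |P α σ| ≤ A) (α σ : ℝ) :
    |clampedKernel P α σ| ≤ A :=
  hP _ (projIcc _ _ _ α).2 _ (projIcc _ _ _ σ).2

end Clamping

section Kernel

variable {E : Type*} [NormedAddCommGroup E] [NormedSpace ℝ E] {P : ℝ → ℝ → ℝ} {A D : ℝ}

noncomputable def kernelIntegral (P : ℝ → ℝ → ℝ) (g : ℝ → E) (α : ℝ) : E :=
  ∫ σ in (0:ℝ)..1, P α σ • g σ

lemma continuous_kernelIntegral {g : ℝ → E} (hP : Continuous (uncurry P)) (hg : Continuous g) :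
    Continuous (kernelIntegral P g) :=
  continuous_parametric_intervalIntegral_of_continuous' (f := fun α σ => P α σ • g σ)
    (hP.smul (hg.comp continuous_snd)) 0 1

lemma norm_kernelIntegral_le {g : ℝ → E} (hP : ∀ α σ, |P α σ| ≤ A) (hg : ∀ σ, ‖g σ‖ ≤ D)
    (α : ℝ) : ‖kernelIntegral P g α‖ ≤ A * D :=
  norm_intervalIntegral_le_of_mem_unitInterval ⟨zero_le_one, le_rfl⟩ fun σ => by
    rw [norm_smul, Real.norm_eq_abs]
    exact mul_le_mul (hP α σ) (hg σ) (norm_nonneg _) ((abs_nonneg _).trans (hP α σ))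

lemma kernelIntegral_sub {f g : ℝ → E} (hP : Continuous (uncurry P)) (hf : Continuous f)
    (hg : Continuous g) (α : ℝ) :
    kernelIntegral P f α - kernelIntegral P g α = kernelIntegral P (f - g) α := by
  have hPα : Continuous (P α) := hP.comp (Continuous.prodMk_right α)
  simp only [kernelIntegral, Pi.sub_apply, smul_sub]
  exact (integral_sub ((hPα.smul hf).intervalIntegrable 0 1)
    ((hPα.smul hg).intervalIntegrable 0 1)).symm

end Kernel

section FFEP

variable {E : Type*} [NormedAddCommGroup E] [NormedSpace ℝ E] {P : ℝ → ℝ → ℝ}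
  {M : E → E →L[ℝ] E} {G : E → E} {y₀ : E} {u v : ℝ → E} {h A₀ C₀ C₁ D₀ D₁ δ τ : ℝ}

/-- `M` is the matrix field `B` acting as operators, and `G` stands for `∇H`. -/
noncomputable def ffepIntegrand (P : ℝ → ℝ → ℝ) (M : E → E →L[ℝ] E) (G : E → E) (u : ℝ → E)
    (α : ℝ) : E :=
  M (u α) (kernelIntegral P (G ∘ u) α)

noncomputable def ffepRHS (y₀ : E) (h : ℝ) (P : ℝ → ℝ → ℝ) (M : E → E →L[ℝ] E) (G : E → E)
    (u : ℝ → E) (τ : ℝ) : E :=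
  y₀ + h • ∫ α in (0:ℝ)..τ, ffepIntegrand P M G u α

lemma continuous_ffepIntegrand (hP : Continuous (uncurry P)) (hM : Continuous M)
    (hG : Continuous G) (hu : Continuous u) : Continuous (ffepIntegrand P M G u) :=
  (hM.comp hu).clm_apply (continuous_kernelIntegral hP (hG.comp hu))

lemma continuous_ffepRHS (hP : Continuous (uncurry P)) (hM : Continuous M)
    (hG : Continuous G) (hu : Continuous u) : Continuous (ffepRHS y₀ h P M G u) :=
  continuous_const.add <| (continuous_primitive (fun _ _ =>
    (continuous_ffepIntegrand hP hM hG hu).intervalIntegrable _ _) 0).const_smul h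

lemma norm_ffepIntegrand_le (hP : ∀ α σ, |P α σ| ≤ A₀) (hM : ∀ α, ‖M (u α)‖ ≤ C₀)
    (hG : ∀ σ, ‖G (u σ)‖ ≤ D₀) (α : ℝ) : ‖ffepIntegrand P M G u α‖ ≤ A₀ * C₀ * D₀ :=
  calc ‖M (u α) (kernelIntegral P (G ∘ u) α)‖
      ≤ ‖M (u α)‖ * ‖kernelIntegral P (G ∘ u) α‖ := (M (u α)).le_opNorm _
    _ ≤ C₀ * (A₀ * D₀) := mul_le_mul (hM α) (norm_kernelIntegral_le hP hG α) (norm_nonneg _)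
        ((norm_nonneg _).trans (hM α))
    _ = A₀ * C₀ * D₀ := by ring

lemma norm_ffepIntegrand_sub_le (hP : Continuous (uncurry P)) (hPb : ∀ α σ, |P α σ| ≤ A₀)
    (hG : Continuous G) (hu : Continuous u) (hv : Continuous v) (hMv : ∀ α, ‖M (v α)‖ ≤ C₀)
    (hGu : ∀ σ, ‖G (u σ)‖ ≤ D₀) (hMuv : ∀ α, ‖M (u α) - M (v α)‖ ≤ C₁ * δ)
    (hGuv : ∀ σ, ‖G (u σ) - G (v σ)‖ ≤ D₁ * δ) (α : ℝ) :
    ‖ffepIntegrand P M G u α - ffepIntegrand P M G v α‖ ≤ A₀ * (C₀ * D₁ + C₁ * D₀) * δ := by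
  have hI : ‖kernelIntegral P (G ∘ u) α - kernelIntegral P (G ∘ v) α‖ ≤ A₀ * (D₁ * δ) := by
    rw [kernelIntegral_sub hP (hG.comp hu) (hG.comp hv)]
    exact norm_kernelIntegral_le hPb hGuv α
  calc ‖M (u α) (kernelIntegral P (G ∘ u) α) - M (v α) (kernelIntegral P (G ∘ v) α)‖
      ≤ ‖M (u α) - M (v α)‖ * ‖kernelIntegral P (G ∘ u) α‖
        + ‖M (v α)‖ * ‖kernelIntegral P (G ∘ u) α - kernelIntegral P (G ∘ v) α‖ :=
        ContinuousLinearMap.norm_apply_sub_apply_le _ _ _ _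
    _ ≤ C₁ * δ * (A₀ * D₀) + C₀ * (A₀ * (D₁ * δ)) := add_le_add
        (mul_le_mul (hMuv α) (norm_kernelIntegral_le hPb hGu α) (norm_nonneg _)
          ((norm_nonneg _).trans (hMuv α)))
        (mul_le_mul (hMv α) hI (norm_nonneg _) ((norm_nonneg _).trans (hMv α)))
    _ = A₀ * (C₀ * D₁ + C₁ * D₀) * δ := by ring

lemma norm_ffepRHS_sub_le (hh : 0 ≤ h) (hP : ∀ α σ, |P α σ| ≤ A₀) (hM : ∀ α, ‖M (u α)‖ ≤ C₀)
    (hG : ∀ σ, ‖G (u σ)‖ ≤ D₀) (hτ : τ ∈ Icc (0:ℝ) 1) :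
    ‖ffepRHS y₀ h P M G u τ - y₀‖ ≤ h * A₀ * C₀ * D₀ := by
  rw [ffepRHS, add_sub_cancel_left, norm_smul, Real.norm_eq_abs, abs_of_nonneg hh]
  calc h * ‖∫ α in (0:ℝ)..τ, ffepIntegrand P M G u α‖ ≤ h * (A₀ * C₀ * D₀) :=
        mul_le_mul_of_nonneg_left (norm_intervalIntegral_le_of_mem_unitInterval hτ
          (norm_ffepIntegrand_le hP hM hG)) hh
    _ = h * A₀ * C₀ * D₀ := by ring

lemma norm_ffepRHS_sub_ffepRHS_le (hh : 0 ≤ h) (hP : Continuous (uncurry P))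
    (hPb : ∀ α σ, |P α σ| ≤ A₀) (hM : Continuous M) (hG : Continuous G) (hu : Continuous u)
    (hv : Continuous v) (hMv : ∀ α, ‖M (v α)‖ ≤ C₀) (hGu : ∀ σ, ‖G (u σ)‖ ≤ D₀)
    (hMuv : ∀ α, ‖M (u α) - M (v α)‖ ≤ C₁ * δ) (hGuv : ∀ σ, ‖G (u σ) - G (v σ)‖ ≤ D₁ * δ)
    (hτ : τ ∈ Icc (0:ℝ) 1) :
    ‖ffepRHS y₀ h P M G u τ - ffepRHS y₀ h P M G v τ‖
      ≤ h * A₀ * (C₀ * D₁ + C₁ * D₀) * δ := by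
  rw [ffepRHS, ffepRHS, add_sub_add_left_eq_sub, ← smul_sub,
    ← integral_sub ((continuous_ffepIntegrand hP hM hG hu).intervalIntegrable _ _)
      ((continuous_ffepIntegrand hP hM hG hv).intervalIntegrable _ _),
    norm_smul, Real.norm_eq_abs, abs_of_nonneg hh]
  calc h * ‖∫ α in (0:ℝ)..τ, ffepIntegrand P M G u α - ffepIntegrand P M G v α‖
      ≤ h * (A₀ * (C₀ * D₁ + C₁ * D₀) * δ) :=
        mul_le_mul_of_nonneg_left (norm_intervalIntegral_le_of_mem_unitInterval hτ
          (norm_ffepIntegrand_sub_le hP hPb hG hu hv hMv hGu hMuv hGuv)) hh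
    _ = h * A₀ * (C₀ * D₁ + C₁ * D₀) * δ := by ring

lemma ffepRHS_congr {P' : ℝ → ℝ → ℝ}
    (hP : ∀ α ∈ Icc (0:ℝ) 1, ∀ σ ∈ Icc (0:ℝ) 1, P α σ = P' α σ) (huv : EqOn u v (Icc 0 1)) :
    EqOn (ffepRHS y₀ h P M G u) (ffepRHS y₀ h P' M G v) (Icc 0 1) := by
  intro τ hτ
  have hsub : uIcc 0 τ ⊆ Icc 0 1 := by
    rw [uIcc_of_le hτ.1]; exact Icc_subset_Icc_right hτ.2
  refine congrArg (y₀ + h • ·) (integral_congr fun α hα => ?_)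
  simp only [ffepIntegrand, kernelIntegral, comp_apply, huv (hsub hα)]
  refine congrArg _ (integral_congr fun σ hσ => ?_)
  rw [uIcc_of_le zero_le_one] at hσ
  simp only [hP α (hsub hα) σ hσ, huv hσ]

lemma ffepRHS_clampedKernel (huv : EqOn u v (Icc 0 1)) :
    EqOn (ffepRHS y₀ h (clampedKernel P) M G u) (ffepRHS y₀ h P M G v) (Icc 0 1) :=
  ffepRHS_congr (fun _ hα _ hσ => clampedKernel_of_mem hα hσ) huv

end FFEP

section FixedPoint

variable {E : Type*} [NormedAddCommGroup E] [NormedSpace ℝ E] [CompleteSpace E]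
  {P : ℝ → ℝ → ℝ} {M : E → E →L[ℝ] E} {G : E → E} {y₀ : E} {R h A₀ C₀ C₁ D₀ D₁ : ℝ}

theorem existsUnique_eq_ffepRHS (hR : 0 ≤ R) (hh : 0 ≤ h) (hP : Continuous (uncurry P))
    (hPb : ∀ α σ, |P α σ| ≤ A₀) (hM : Continuous M) (hM0 : ∀ y ∈ closedBall y₀ R, ‖M y‖ ≤ C₀)
    (hM1 : ∀ y ∈ closedBall y₀ R, ∀ z ∈ closedBall y₀ R, ‖M y - M z‖ ≤ C₁ * ‖y - z‖)
    (hG : Continuous G) (hG0 : ∀ y ∈ closedBall y₀ R, ‖G y‖ ≤ D₀)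
    (hG1 : ∀ y ∈ closedBall y₀ R, ∀ z ∈ closedBall y₀ R, ‖G y - G z‖ ≤ D₁ * ‖y - z‖)
    (hhR : h * A₀ * C₀ * D₀ ≤ R) (hhL : h * A₀ * (C₀ * D₁ + C₁ * D₀) < 1) :
    ∃! u : C(Icc (0:ℝ) 1, closedBall y₀ R),
      ∀ t, (u t : E) = ffepRHS y₀ h P M G (clampedPath u) t := by
  have : CompleteSpace (closedBall y₀ R) := isClosed_closedBall.completeSpace_coe
  have : Nonempty C(Icc (0:ℝ) 1, closedBall y₀ R) :=
    ⟨.const _ ⟨y₀, mem_closedBall_self hR⟩⟩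
  have hmaps (u : C(Icc (0:ℝ) 1, closedBall y₀ R)) (t : Icc (0:ℝ) 1) :
      ffepRHS y₀ h P M G (clampedPath u) t ∈ closedBall y₀ R :=
    mem_closedBall_iff_norm.2 <| (norm_ffepRHS_sub_le hh hPb (fun α => hM0 _ (clampedPath_mem u α))
      (fun σ => hG0 _ (clampedPath_mem u σ)) t.2).trans hhR
  let T : C(Icc (0:ℝ) 1, closedBall y₀ R) → C(Icc (0:ℝ) 1, closedBall y₀ R) := fun u =>
    ⟨fun t => ⟨_, hmaps u t⟩, Continuous.subtype_mk
      ((continuous_ffepRHS hP hM hG (continuous_clampedPath u)).comp continuous_subtype_val) _⟩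
  have hT : ContractingWith (h * A₀ * (C₀ * D₁ + C₁ * D₀)).toNNReal T := by
    refine ⟨Real.toNNReal_lt_one.2 hhL, LipschitzWith.of_dist_le_mul fun u v => ?_⟩
    refine (ContinuousMap.dist_le (by positivity)).2 fun t => ?_
    calc dist (T u t) (T v t)
        = ‖ffepRHS y₀ h P M G (clampedPath u) t - ffepRHS y₀ h P M G (clampedPath v) t‖ :=
          dist_eq_norm _ _
      _ ≤ h * A₀ * (C₀ * D₁ + C₁ * D₀) * dist u v :=
          norm_ffepRHS_sub_ffepRHS_le hh hP hPb hM hG (continuous_clampedPath u)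
            (continuous_clampedPath v)
            (fun α => hM0 _ (clampedPath_mem v α)) (fun σ => hG0 _ (clampedPath_mem u σ))
            (fun α => norm_sub_le_mul_dist_of_lipschitz_bound hM1 u v _)
            (fun σ => norm_sub_le_mul_dist_of_lipschitz_bound hG1 u v _) t.2
      _ ≤ _ := by gcongr; exact Real.le_coe_toNNReal _
  refine ⟨hT.fixedPoint T, fun t => ?_, fun v hv => ?_⟩
  · exact congrArg (fun w : C(Icc (0:ℝ) 1, closedBall y₀ R) => (w t : E))
      hT.fixedPoint_isFixedPt.symm
  · exact hT.fixedPoint_unique (ContinuousMap.ext fun t => Subtype.ext (hv t).symm)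

def IsFFEPSolution (y₀ : E) (R h : ℝ) (P : ℝ → ℝ → ℝ) (M : E → E →L[ℝ] E) (G : E → E)
    (u : ℝ → E) : Prop :=
  ContinuousOn u (Icc 0 1) ∧ MapsTo u (Icc 0 1) (closedBall y₀ R) ∧
    EqOn u (ffepRHS y₀ h P M G u) (Icc 0 1)

theorem exists_isFFEPSolution_unique (hR : 0 ≤ R) (hh : 0 ≤ h)
    (hP : ContinuousOn (uncurry P) (Icc (0:ℝ) 1 ×ˢ Icc (0:ℝ) 1))
    (hPb : ∀ α ∈ Icc (0:ℝ) 1, ∀ σ ∈ Icc (0:ℝ) 1, |P α σ| ≤ A₀)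
    (hM : Continuous M) (hM0 : ∀ y ∈ closedBall y₀ R, ‖M y‖ ≤ C₀)
    (hM1 : ∀ y ∈ closedBall y₀ R, ∀ z ∈ closedBall y₀ R, ‖M y - M z‖ ≤ C₁ * ‖y - z‖)
    (hG : Continuous G) (hG0 : ∀ y ∈ closedBall y₀ R, ‖G y‖ ≤ D₀)
    (hG1 : ∀ y ∈ closedBall y₀ R, ∀ z ∈ closedBall y₀ R, ‖G y - G z‖ ≤ D₁ * ‖y - z‖)
    (hhR : h * A₀ * C₀ * D₀ ≤ R) (hhL : h * A₀ * (C₀ * D₁ + C₁ * D₀) < 1) :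
    ∃ u, IsFFEPSolution y₀ R h P M G u ∧
      ∀ v, IsFFEPSolution y₀ R h P M G v → EqOn v u (Icc 0 1) := by
  obtain ⟨u, hu, huniq⟩ := existsUnique_eq_ffepRHS hR hh (continuous_clampedKernel hP)
    (abs_clampedKernel_le hPb) hM hM0 hM1 hG hG0 hG1 hhR hhL
  refine ⟨clampedPath u, ⟨(continuous_clampedPath u).continuousOn,
    fun τ _ => clampedPath_mem u τ, fun τ hτ => ?_⟩, fun v ⟨hvc, hvK, hv⟩ τ hτ => ?_⟩
  · rw [clampedPath_of_mem u hτ, hu ⟨τ, hτ⟩]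
    exact ffepRHS_clampedKernel (eqOn_refl _ _) hτ
  · let v' : C(Icc (0:ℝ) 1, closedBall y₀ R) :=
      ⟨fun t => ⟨v t, hvK t.2⟩, hvc.domRestrict.subtype_mk _⟩
    have hv' : EqOn (clampedPath v') v (Icc 0 1) := fun s hs => clampedPath_of_mem v' hs
    have : v' = u := huniq v' fun t =>
      (hv t.2).trans (ffepRHS_clampedKernel hv' t.2).symm
    rw [clampedPath_of_mem u hτ, ← this]
    rfl

end FixedPoint

theorem ffep_exists_unique_general
    (d : ℕ) (y₀ : EuclideanSpace ℝ (Fin d)) (R : ℝ) (hR : 0 < R)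
    (K : Set (EuclideanSpace ℝ (Fin d)))
    (hK : K = {y : EuclideanSpace ℝ (Fin d) | ‖y - y₀‖ ≤ R})
    (P : ℝ → ℝ → ℝ) (A₀ C₀ C₁ D₀ D₁ : ℝ)
    (hPcont : ContinuousOn (fun p : ℝ × ℝ => P p.1 p.2)
      (Set.Icc (0:ℝ) 1 ×ˢ Set.Icc (0:ℝ) 1))
    (hPbound : ∀ τ ∈ Set.Icc (0:ℝ) 1, ∀ σ ∈ Set.Icc (0:ℝ) 1, |P τ σ| ≤ A₀)
    (B : EuclideanSpace ℝ (Fin d) → Matrix (Fin d) (Fin d) ℝ)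
    (hBcont : Continuous fun y => (B y : Fin d → Fin d → ℝ))
    (hB0 : ∀ y ∈ K, ‖Matrix.toEuclideanCLM (𝕜 := ℝ) (B y)‖ ≤ C₀)
    (hB1 : ∀ y ∈ K, ∀ z ∈ K,
      ‖Matrix.toEuclideanCLM (𝕜 := ℝ) (B y) - Matrix.toEuclideanCLM (𝕜 := ℝ) (B z)‖
        ≤ C₁ * ‖y - z‖)
    (G : EuclideanSpace ℝ (Fin d) → EuclideanSpace ℝ (Fin d))
    (hGcont : Continuous G)
    (hG0 : ∀ y ∈ K, ‖G y‖ ≤ D₀)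
    (hG1 : ∀ y ∈ K, ∀ z ∈ K, ‖G y - G z‖ ≤ D₁ * ‖y - z‖)
    (h : ℝ) (hh0 : 0 ≤ h)
    (hhR : h * A₀ * C₀ * D₀ ≤ R)
    (hhcontr : h * A₀ * (C₀ * D₁ + C₁ * D₀) < 1) :
    ∃ u : ℝ → EuclideanSpace ℝ (Fin d),
      (ContinuousOn u (Set.Icc (0:ℝ) 1) ∧ (∀ τ ∈ Set.Icc (0:ℝ) 1, u τ ∈ K) ∧
        ∀ τ ∈ Set.Icc (0:ℝ) 1,
          u τ = y₀ + h • (∫ α in (0:ℝ)..τ,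
            WithLp.toLp 2 ((B (u α)).mulVec (fun i => (∫ σ in (0:ℝ)..1, P α σ • G (u σ)) i)) :
              EuclideanSpace ℝ (Fin d))) ∧
      ∀ v : ℝ → EuclideanSpace ℝ (Fin d),
        (ContinuousOn v (Set.Icc (0:ℝ) 1) ∧ (∀ τ ∈ Set.Icc (0:ℝ) 1, v τ ∈ K) ∧
          ∀ τ ∈ Set.Icc (0:ℝ) 1,
            v τ = y₀ + h • (∫ α in (0:ℝ)..τ,
              WithLp.toLp 2 ((B (v α)).mulVec (fun i => (∫ σ in (0:ℝ)..1, P α σ • G (v σ)) i)) :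
                EuclideanSpace ℝ (Fin d))) →
        ∀ τ ∈ Set.Icc (0:ℝ) 1, v τ = u τ := by
  obtain rfl : K = closedBall y₀ R := hK.trans (ext fun y => mem_closedBall_iff_norm.symm)
  have hM : Continuous fun y => Matrix.toEuclideanCLM (𝕜 := ℝ) (B y) :=
    (LinearMap.continuous_of_finiteDimensional
      (Matrix.toEuclideanCLM (𝕜 := ℝ) (n := Fin d)).toAlgEquiv.toLinearMap).comp hBcont
  obtain ⟨u, hu, huniq⟩ := exists_isFFEPSolution_unique hR.le hh0 hPcont hPbound hM hB0 hB1
    hGcont hG0 hG1 hhR hhcontr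
  exact ⟨u, hu, fun v hv => huniq v hv⟩

/-- **Existence and uniqueness for the FFEP fixed-point equation (Theorem 4.1).**
Under boundedness and Lipschitz assumptions on the kernel `P`, the matrix `B`
and the vector field `G` on the ball `K = {y : ‖y - y₀‖ ≤ R}`, and for a stepsize
`h` with `h A₀ C₀ D₀ ≤ R` and `h A₀ (C₀ D₁ + C₁ D₀) < 1`, there is exactly one
continuous `K`-valued function `u` on `[0,1]` with
`u(τ) = y₀ + h ∫₀^τ B(u(α)) (∫₀¹ P(α,σ) G(u(σ)) dσ) dα`. -/
theorem ffep_exists_unique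
    (d : ℕ) (hd : 1 ≤ d) (y₀ : EuclideanSpace ℝ (Fin d)) (R : ℝ) (hR : 0 < R)
    (K : Set (EuclideanSpace ℝ (Fin d)))
    (hK : K = {y : EuclideanSpace ℝ (Fin d) | ‖y - y₀‖ ≤ R})
    (P : ℝ → ℝ → ℝ) (A₀ C₀ C₁ D₀ D₁ : ℝ)
    (hPcont : ContinuousOn (fun p : ℝ × ℝ => P p.1 p.2)
      (Set.Icc (0:ℝ) 1 ×ˢ Set.Icc (0:ℝ) 1))
    (hPbound : ∀ τ ∈ Set.Icc (0:ℝ) 1, ∀ σ ∈ Set.Icc (0:ℝ) 1, |P τ σ| ≤ A₀)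
    (B : EuclideanSpace ℝ (Fin d) → Matrix (Fin d) (Fin d) ℝ)
    (hBcont : Continuous fun y => (B y : Fin d → Fin d → ℝ))
    (hB0 : ∀ y ∈ K, ‖Matrix.toEuclideanCLM (𝕜 := ℝ) (B y)‖ ≤ C₀)
    (hB1 : ∀ y ∈ K, ∀ z ∈ K,
      ‖Matrix.toEuclideanCLM (𝕜 := ℝ) (B y) - Matrix.toEuclideanCLM (𝕜 := ℝ) (B z)‖
        ≤ C₁ * ‖y - z‖)
    (G : EuclideanSpace ℝ (Fin d) → EuclideanSpace ℝ (Fin d))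
    (hGcont : Continuous G)
    (hG0 : ∀ y ∈ K, ‖G y‖ ≤ D₀)
    (hG1 : ∀ y ∈ K, ∀ z ∈ K, ‖G y - G z‖ ≤ D₁ * ‖y - z‖)
    (h : ℝ) (hh0 : 0 ≤ h)
    (hhR : h * A₀ * C₀ * D₀ ≤ R)
    (hhcontr : h * A₀ * (C₀ * D₁ + C₁ * D₀) < 1) :
    ∃ u : ℝ → EuclideanSpace ℝ (Fin d),
      (ContinuousOn u (Set.Icc (0:ℝ) 1) ∧ (∀ τ ∈ Set.Icc (0:ℝ) 1, u τ ∈ K) ∧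
        ∀ τ ∈ Set.Icc (0:ℝ) 1,
          u τ = y₀ + h • (∫ α in (0:ℝ)..τ,
            WithLp.toLp 2 ((B (u α)).mulVec (fun i => (∫ σ in (0:ℝ)..1, P α σ • G (u σ)) i)) :
              EuclideanSpace ℝ (Fin d))) ∧
      ∀ v : ℝ → EuclideanSpace ℝ (Fin d),
        (ContinuousOn v (Set.Icc (0:ℝ) 1) ∧ (∀ τ ∈ Set.Icc (0:ℝ) 1, v τ ∈ K) ∧
          ∀ τ ∈ Set.Icc (0:ℝ) 1,
            v τ = y₀ + h • (∫ α in (0:ℝ)..τ,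
              WithLp.toLp 2 ((B (v α)).mulVec (fun i => (∫ σ in (0:ℝ)..1, P α σ • G (v σ)) i)) :
                EuclideanSpace ℝ (Fin d))) →
        ∀ τ ∈ Set.Icc (0:ℝ) 1, v τ = u τ :=
  ffep_exists_unique_general d y₀ R hR K hK P A₀ C₀ C₁ D₀ D₁ hPcont hPbound B hBcont hB0 hB1 G
    hGcont hG0 hG1 h hh0 hhR hhcontr
end

section
/- Let d ≥ 1, r ≥ 1, y₀ ∈ ℝ^d and δ > 0. Let U : (−δ,δ) × [0,1] → ℝ^d and K : (−δ,δ) × [0,1] × [0,1] → ℝ be C^∞, let B : ℝ^d → Matrix d d ℝ and G : ℝ^d → ℝ^d be C^∞, and suppose that for all h ∈ (−δ,δ) and τ ∈ [0,1]: U(h,τ) = y₀ + h ∫₀¹ ( ∫₀^τ K(h,α,σ) B(U(h,α)) dα ) G(U(h,σ)) dσ. Assume that for each n with 0 ≤ n ≤ r−1, the function (τ,σ) ↦ (∂ⁿK/∂hⁿ)(0,τ,σ) is a polynomial of degree at most n in τ and of degree at most n in σ. Then for each m with 0 ≤ m ≤ r−1, every component of the function τ ↦ (1/m!)·(∂^m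 U/∂h^m)(0,τ) is a polynomial in τ of degree at most m. -/
open Set Finset MeasureTheory intervalIntegral Metric Polynomial Matrix



section DSeqTools

variable {E : Type*} [NormedAddCommGroup E] [NormedSpace ℝ E]

/-- A sequence of functions, each the derivative of the previous one on `s`. -/
def DSeq (s : Set ℝ) (f : ℕ → ℝ → E) : Prop :=
  ∀ k, ∀ x ∈ s, HasDerivAt (f k) (f (k + 1) x) x

lemma DSeq.iteratedDeriv_eq {s : Set ℝ} {f : ℕ → ℝ → E} (hs : IsOpen s) (hf : DSeq s f)
    (n : ℕ) : ∀ x ∈ s, iteratedDeriv n (f 0) x = f n x := by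
  induction n with
  | zero => intro x hx; simp [iteratedDeriv_zero]
  | succ n ih =>
    intro x hx
    rw [iteratedDeriv_succ]
    have h1 : iteratedDeriv n (f 0) =ᶠ[nhds x] f n :=
      Filter.eventually_of_mem (hs.mem_nhds hx) ih
    rw [h1.deriv_eq]
    exact (hf n x hx).deriv

lemma DSeq.sum {s : Set ℝ} {ι : Type*} (t : Finset ι) {f : ι → ℕ → ℝ → E}
    (hf : ∀ i ∈ t, DSeq s (f i)) : DSeq s (fun k x => ∑ i ∈ t, f i k x) :=
  fun k x hx => HasDerivAt.fun_sum (fun i hi => hf i hi k x hx)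

lemma DSeq.shift {s : Set ℝ} {f : ℕ → ℝ → E} (hf : DSeq s f) :
    DSeq s (fun k => f (k + 1)) := fun k x hx => hf (k + 1) x hx

lemma dseq_of_contDiffOn {s : Set ℝ} (hs : IsOpen s) {f : ℝ → E} (hf : ContDiffOn ℝ (⊤ : ℕ∞) f s) :
    DSeq s (fun k => iteratedDeriv k f) := by
  intro k x hx
  have h2 : DifferentiableOn ℝ (iteratedDerivWithin k f s) s :=
    hf.differentiableOn_iteratedDerivWithin (by exact_mod_cast lt_top_iff_ne_top.2 (by simp))
      hs.uniqueDiffOn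
  have h3 : Set.EqOn (iteratedDerivWithin k f s) (iteratedDeriv k f) s := by
    intro y hy
    simp only [iteratedDerivWithin, iteratedDeriv]
    rw [iteratedFDerivWithin_of_isOpen k hs hy]
  have h1 : DifferentiableAt ℝ (iteratedDeriv k f) x := by
    have := (h2 x hx).differentiableAt (hs.mem_nhds hx)
    exact this.congr_of_eventuallyEq
      (Filter.eventually_of_mem (hs.mem_nhds hx) fun y hy => (h3 hy).symm)
  have := h1.hasDerivAt
  rwa [← iteratedDeriv_succ] at this

/-- the Leibniz convolution of two sequences -/
noncomputable def lconv (f g : ℕ → ℝ → ℝ) : ℕ → ℝ → ℝ :=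
  fun k x => ∑ j ∈ Finset.range (k + 1), (k.choose j : ℝ) * (f j x * g (k - j) x)

lemma leibniz_step (F G : ℕ → ℝ) (k : ℕ) :
    ∑ j ∈ Finset.range (k + 2), (((k + 1).choose j : ℝ)) * (F j * G (k + 1 - j))
      = ∑ j ∈ Finset.range (k + 1), (k.choose j : ℝ) *
          (F (j + 1) * G (k - j) + F j * G (k - j + 1)) := by
  have hA : ∑ j ∈ Finset.range (k + 2), ((k.choose j : ℝ)) * (F j * G (k + 1 - j))
      = ∑ j ∈ Finset.range (k + 1), (k.choose j : ℝ) * (F j * G (k - j + 1)) := by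
    rw [Finset.sum_range_succ]
    rw [Nat.choose_succ_self]
    push_cast
    rw [zero_mul, add_zero]
    refine Finset.sum_congr rfl fun j hj => ?_
    rw [Nat.succ_sub (Nat.lt_succ_iff.mp (Finset.mem_range.mp hj))]
  have hB : ∑ j ∈ Finset.range (k + 2), ((k.choose j : ℝ)) * (F j * G (k + 1 - j))
      = (∑ j ∈ Finset.range (k + 1), (k.choose (j + 1) : ℝ) * (F (j + 1) * G (k - j)))
        + (k.choose 0 : ℝ) * (F 0 * G (k + 1)) := by
    rw [Finset.sum_range_succ' (fun j => ((k.choose j : ℝ)) * (F j * G (k + 1 - j))) (k + 1)]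
    simp [Nat.succ_sub_succ]
  have hL : ∑ j ∈ Finset.range (k + 2), (((k + 1).choose j : ℝ)) * (F j * G (k + 1 - j))
      = (∑ j ∈ Finset.range (k + 1), (((k + 1).choose (j + 1) : ℝ)) * (F (j + 1) * G (k - j)))
        + ((k + 1).choose 0 : ℝ) * (F 0 * G (k + 1)) := by
    rw [Finset.sum_range_succ' (fun j => (((k + 1).choose j : ℝ)) * (F j * G (k + 1 - j))) (k + 1)]
    simp [Nat.succ_sub_succ]
  rw [hL]
  have hsplit : ∀ j, (((k + 1).choose (j + 1) : ℝ)) = (k.choose j : ℝ) + (k.choose (j + 1) : ℝ) := by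
    intro j; rw [Nat.choose_succ_succ]; push_cast; ring
  calc (∑ j ∈ Finset.range (k + 1), (((k + 1).choose (j + 1) : ℝ)) * (F (j + 1) * G (k - j)))
        + ((k + 1).choose 0 : ℝ) * (F 0 * G (k + 1))
      = (∑ j ∈ Finset.range (k + 1), (k.choose j : ℝ) * (F (j + 1) * G (k - j)))
        + ((∑ j ∈ Finset.range (k + 1), (k.choose (j + 1) : ℝ) * (F (j + 1) * G (k - j)))
            + (k.choose 0 : ℝ) * (F 0 * G (k + 1))) := by
        simp only [hsplit, add_mul, Nat.choose_zero_right, Nat.cast_one, one_mul]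
        rw [Finset.sum_add_distrib]
        ring
    _ = (∑ j ∈ Finset.range (k + 1), (k.choose j : ℝ) * (F (j + 1) * G (k - j)))
        + (∑ j ∈ Finset.range (k + 1), (k.choose j : ℝ) * (F j * G (k - j + 1))) := by
        rw [← hB, hA]
    _ = ∑ j ∈ Finset.range (k + 1), (k.choose j : ℝ) *
          (F (j + 1) * G (k - j) + F j * G (k - j + 1)) := by
        rw [← Finset.sum_add_distrib]
        refine Finset.sum_congr rfl fun j hj => ?_
        ring

lemma DSeq.lconv {s : Set ℝ} {f g : ℕ → ℝ → ℝ} (hf : DSeq s f) (hg : DSeq s g) :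
    DSeq s (lconv f g) := by
  intro k x hx
  have hd : HasDerivAt (fun x => ∑ j ∈ Finset.range (k + 1), (k.choose j : ℝ) * (f j x * g (k - j) x))
      (∑ j ∈ Finset.range (k + 1), (k.choose j : ℝ) *
        (f (j + 1) x * g (k - j) x + f j x * g (k - j + 1) x)) x := by
    apply HasDerivAt.fun_sum
    intro j hj
    exact (((hf j x hx).mul (hg (k - j) x hx))).const_mul _
  have halg := leibniz_step (fun j => f j x) (fun j => g j x) k
  show HasDerivAt (fun x => ∑ j ∈ Finset.range (k + 1), (k.choose j : ℝ) * (f j x * g (k - j) x))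
      (∑ j ∈ Finset.range (k + 1 + 1), ((k + 1).choose j : ℝ) * (f j x * g (k + 1 - j) x)) x
  rw [show k + 1 + 1 = k + 2 from rfl, halg]
  exact hd

/-- Leibniz rule via derivative sequences. -/
lemma iteratedDeriv_mul_of_dseq {s : Set ℝ} {f g : ℕ → ℝ → ℝ} (hs : IsOpen s)
    (hf : DSeq s f) (hg : DSeq s g) (n : ℕ) {x : ℝ} (hx : x ∈ s) :
    iteratedDeriv n (fun y => f 0 y * g 0 y) x
      = ∑ j ∈ Finset.range (n + 1), (n.choose j : ℝ) * (f j x * g (n - j) x) := by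
  have := (hf.lconv hg).iteratedDeriv_eq hs n x hx
  simp only [lconv] at this
  rw [← this]
  congr 1
  funext y
  simp [lconv]

end DSeqTools


/-- `f` agrees on `[0,1]` with a polynomial of degree at most `n`. -/
def PolyOn (n : ℕ) (f : ℝ → ℝ) : Prop :=
  ∃ p : Polynomial ℝ, p.natDegree ≤ n ∧ ∀ x ∈ Set.Icc (0:ℝ) 1, f x = p.eval x

lemma PolyOn.mono {m n : ℕ} {f : ℝ → ℝ} (h : m ≤ n) (hf : PolyOn m f) : PolyOn n f := by
  obtain ⟨p, hp, he⟩ := hf; exact ⟨p, hp.trans h, he⟩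

lemma polyOn_const (n : ℕ) (c : ℝ) : PolyOn n (fun _ => c) :=
  ⟨Polynomial.C c, by simp, by simp⟩

lemma PolyOn.congr {n : ℕ} {f g : ℝ → ℝ} (hf : PolyOn n f)
    (h : ∀ x ∈ Set.Icc (0:ℝ) 1, g x = f x) : PolyOn n g := by
  obtain ⟨p, hp, he⟩ := hf; exact ⟨p, hp, fun x hx => (h x hx).trans (he x hx)⟩

lemma PolyOn.add {n : ℕ} {f g : ℝ → ℝ} (hf : PolyOn n f) (hg : PolyOn n g) :
    PolyOn n (fun x => f x + g x) := by
  obtain ⟨p, hp, hpe⟩ := hf; obtain ⟨q, hq, hqe⟩ := hg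
  exact ⟨p + q, (Polynomial.natDegree_add_le p q).trans (max_le hp hq),
    fun x hx => by simp [hpe x hx, hqe x hx]⟩

lemma PolyOn.const_mul {n : ℕ} {f : ℝ → ℝ} (c : ℝ) (hf : PolyOn n f) :
    PolyOn n (fun x => c * f x) := by
  obtain ⟨p, hp, hpe⟩ := hf
  exact ⟨Polynomial.C c * p, (Polynomial.natDegree_C_mul_le c p).trans hp,
    fun x hx => by simp [hpe x hx]⟩

lemma PolyOn.mul {a b : ℕ} {f g : ℝ → ℝ} (hf : PolyOn a f) (hg : PolyOn b g) :
    PolyOn (a + b) (fun x => f x * g x) := by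
  obtain ⟨p, hp, hpe⟩ := hf; obtain ⟨q, hq, hqe⟩ := hg
  exact ⟨p * q, (Polynomial.natDegree_mul_le).trans (add_le_add hp hq),
    fun x hx => by simp [hpe x hx, hqe x hx]⟩

lemma polyOn_sum {ι : Type*} {n : ℕ} (t : Finset ι) (f : ι → ℝ → ℝ)
    (h : ∀ i ∈ t, PolyOn n (f i)) : PolyOn n (fun x => ∑ i ∈ t, f i x) := by
  classical
  induction t using Finset.induction_on with
  | empty => simpa using polyOn_const n 0
  | insert _ _ hnot ih =>
    rename_i a t'
    simp only [Finset.sum_insert hnot]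
    exact (h a (Finset.mem_insert_self a t')).add
      (ih fun i hi => h i (Finset.mem_insert_of_mem hi))

lemma polyOn_monomial {n k : ℕ} (c : ℝ) (hk : k ≤ n) : PolyOn n (fun x => c * x ^ k) :=
  ⟨Polynomial.C c * Polynomial.X ^ k,
    (Polynomial.natDegree_C_mul_le _ _).trans (by simp [hk]), fun x hx => by simp⟩

lemma PolyOn.integral {n : ℕ} {f : ℝ → ℝ} (hf : PolyOn n f) :
    PolyOn (n + 1) (fun τ => ∫ x in (0:ℝ)..τ, f x) := by
  obtain ⟨p, hp, hpe⟩ := hf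
  refine ⟨∑ i ∈ Finset.range (n + 1), Polynomial.C (p.coeff i / (i + 1)) * Polynomial.X ^ (i + 1),
    ?_, ?_⟩
  · refine Polynomial.natDegree_sum_le_of_forall_le _ _ fun i hi => ?_
    exact (Polynomial.natDegree_C_mul_le _ _).trans
      (by simp [Nat.lt_succ_iff.mp (Finset.mem_range.mp hi)])
  · intro τ hτ
    have hsub : Set.uIcc (0:ℝ) τ ⊆ Set.Icc 0 1 := by
      rw [Set.uIcc_of_le hτ.1]; exact Set.Icc_subset_Icc le_rfl hτ.2
    have h1 : ∫ x in (0:ℝ)..τ, f x = ∫ x in (0:ℝ)..τ, p.eval x :=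
      intervalIntegral.integral_congr fun x hx => hpe x (hsub hx)
    have h2 : ∀ x, p.eval x = ∑ i ∈ Finset.range (n + 1), p.coeff i * x ^ i := fun x =>
      Polynomial.eval_eq_sum_range' (Nat.lt_succ_of_le hp) x
    show (∫ x in (0:ℝ)..τ, f x) = _
    rw [h1]
    simp only [h2]
    rw [intervalIntegral.integral_finset_sum (fun i _ =>
      ((by fun_prop : Continuous fun x : ℝ => p.coeff i * x ^ i).intervalIntegrable 0 τ))]
    rw [Polynomial.eval_finset_sum]
    refine Finset.sum_congr rfl fun i hi => ?_
    rw [intervalIntegral.integral_const_mul, integral_pow]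
    simp
    ring

lemma PolyOn.exists_coeffs {n : ℕ} {f : ℝ → ℝ} (h : PolyOn n f) :
    ∃ c : Fin (n + 1) → ℝ, ∀ x ∈ Set.Icc (0:ℝ) 1, f x = ∑ k, c k * x ^ (k : ℕ) := by
  obtain ⟨p, hp, hpe⟩ := h
  refine ⟨fun k => p.coeff k, fun x hx => ?_⟩
  rw [hpe x hx, Polynomial.eval_eq_sum_range' (Nat.lt_succ_of_le hp) x,
    ← Fin.sum_univ_eq_sum_range fun i => p.coeff i * x ^ i]



/-- iterated partial derivative in the first variable, within `S` -/
noncomputable def hpart (S : Set (ℝ × ℝ × ℝ)) (Θ : ℝ × ℝ × ℝ → ℝ) : ℕ → ℝ × ℝ × ℝ → ℝ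
  | 0 => Θ
  | n + 1 => fun p => fderivWithin ℝ (hpart S Θ n) S p (1, 0)

section Psi
variable {s : Set ℝ} {T : Set (ℝ × ℝ)} {Θ : ℝ × ℝ × ℝ → ℝ}

lemma hpart_contDiffOn (hS : UniqueDiffOn ℝ (s ×ˢ T)) (hΘ : ContDiffOn ℝ (⊤ : ℕ∞) Θ (s ×ˢ T)) :
    ∀ n, ContDiffOn ℝ (⊤ : ℕ∞) (hpart (s ×ˢ T) Θ n) (s ×ˢ T)
  | 0 => hΘ
  | (n + 1) =>
    (((hpart_contDiffOn hS hΘ n).fderivWithin hS (by simp)).clm_apply contDiffOn_const)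

lemma hpart_hasDerivAt (hs : IsOpen s) (hS : UniqueDiffOn ℝ (s ×ˢ T))
    (hΘ : ContDiffOn ℝ (⊤ : ℕ∞) Θ (s ×ˢ T)) (n : ℕ) {q : ℝ × ℝ} (hq : q ∈ T) {h : ℝ} (hh : h ∈ s) :
    HasDerivAt (fun x => hpart (s ×ˢ T) Θ n (x, q)) (hpart (s ×ˢ T) Θ (n + 1) (h, q)) h := by
  have hd : DifferentiableWithinAt ℝ (hpart (s ×ˢ T) Θ n) (s ×ˢ T) (h, q) :=
    ((hpart_contDiffOn hS hΘ n).differentiableOn (by simp)) _ (Set.mk_mem_prod hh hq)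
  have hline : HasDerivAt (fun x : ℝ => (x, q)) ((1 : ℝ), (0 : ℝ × ℝ)) h :=
    (hasDerivAt_id h).prodMk (hasDerivAt_const h q)
  have hcomp := hd.hasFDerivWithinAt.comp_hasDerivWithinAt h hline.hasDerivWithinAt
    (fun x hx => Set.mk_mem_prod hx hq)
  have := hcomp.hasDerivAt (hs.mem_nhds hh)
  simpa [hpart, Function.comp_def] using this

lemma hpart_dseq (hs : IsOpen s) (hS : UniqueDiffOn ℝ (s ×ˢ T))
    (hΘ : ContDiffOn ℝ (⊤ : ℕ∞) Θ (s ×ˢ T)) {q : ℝ × ℝ} (hq : q ∈ T) :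
    DSeq s (fun n h => hpart (s ×ˢ T) Θ n (h, q)) :=
  fun n x hx => hpart_hasDerivAt hs hS hΘ n hq hx

end Psi

noncomputable def Jp (S : Set (ℝ × ℝ × ℝ)) (Θ : ℝ × ℝ × ℝ → ℝ) (n : ℕ) (h τ σ : ℝ) : ℝ :=
  ∫ α in (0:ℝ)..τ, hpart S Θ n (h, α, σ)

noncomputable def Fp (S : Set (ℝ × ℝ × ℝ)) (Θ : ℝ × ℝ × ℝ → ℝ) (n : ℕ) (h τ : ℝ) : ℝ :=
  ∫ σ in (0:ℝ)..1, Jp S Θ n h τ σ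

abbrev T1 : Set (ℝ × ℝ) := Set.Icc (0:ℝ) 1 ×ˢ Set.Icc (0:ℝ) 1

section Integrals

variable {s : Set ℝ} {Θ : ℝ × ℝ × ℝ → ℝ}

variable (hs : IsOpen s) (hΘ : ContDiffOn ℝ (⊤ : ℕ∞) Θ (s ×ˢ T1))
include hs hΘ

lemma hpart_udo : UniqueDiffOn ℝ (s ×ˢ T1) :=
  hs.uniqueDiffOn.prod ((uniqueDiffOn_Icc one_pos).prod (uniqueDiffOn_Icc one_pos))

lemma hpart_slice_contOn (n : ℕ) {x σ : ℝ} (hx : x ∈ s) (hσ : σ ∈ Set.Icc (0:ℝ) 1) :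
    ContinuousOn (fun α => hpart (s ×ˢ T1) Θ n (x, α, σ)) (Set.Icc (0:ℝ) 1) := by
  have hc := (hpart_contDiffOn (hpart_udo hs hΘ) hΘ n).continuousOn
  exact hc.comp (by fun_prop) (fun α hα => Set.mk_mem_prod hx (Set.mk_mem_prod hα hσ))

lemma hpart_slice_contOn_sigma (n : ℕ) {x α : ℝ} (hx : x ∈ s) (hα : α ∈ Set.Icc (0:ℝ) 1) :
    ContinuousOn (fun σ => hpart (s ×ˢ T1) Θ n (x, α, σ)) (Set.Icc (0:ℝ) 1) := by
  have hc := (hpart_contDiffOn (hpart_udo hs hΘ) hΘ n).continuousOn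
  exact hc.comp (by fun_prop) (fun σ hσ => Set.mk_mem_prod hx (Set.mk_mem_prod hα hσ))

lemma hpart_exists_bound (n : ℕ) {h ε : ℝ} (hball : closedBall h ε ⊆ s) :
    ∃ M : ℝ, 0 ≤ M ∧ ∀ x ∈ closedBall h ε, ∀ α ∈ Set.Icc (0:ℝ) 1, ∀ σ ∈ Set.Icc (0:ℝ) 1,
      |hpart (s ×ˢ T1) Θ n (x, α, σ)| ≤ M := by
  have hc := (hpart_contDiffOn (hpart_udo hs hΘ) hΘ n).continuousOn
  obtain ⟨C, hC⟩ := ((isCompact_closedBall h ε).prod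
    (isCompact_Icc.prod isCompact_Icc)).exists_bound_of_continuousOn
    (hc.mono (Set.prod_mono hball subset_rfl))
  refine ⟨max C 0, le_max_right _ _, fun x hx α hα σ hσ => ?_⟩
  have hmem : (x, α, σ) ∈ closedBall h ε ×ˢ T1 :=
    Set.mem_prod.mpr ⟨hx, Set.mem_prod.mpr ⟨hα, hσ⟩⟩
  have hb := hC _ hmem
  rw [Real.norm_eq_abs] at hb
  exact hb.trans (le_max_left _ _)

omit hs hΘ in
lemma uIoc_sub_Icc' {τ : ℝ} (hτ : τ ∈ Set.Icc (0:ℝ) 1) : Set.uIoc (0:ℝ) τ ⊆ Set.Icc (0:ℝ) 1 := by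
  rw [Set.uIoc_of_le hτ.1]
  exact Set.Ioc_subset_Icc_self.trans (Set.Icc_subset_Icc_right hτ.2)

omit hs hΘ in
lemma uIcc_sub_Icc' {τ : ℝ} (hτ : τ ∈ Set.Icc (0:ℝ) 1) : Set.uIcc (0:ℝ) τ ⊆ Set.Icc (0:ℝ) 1 := by
  rw [Set.uIcc_of_le hτ.1]
  exact Set.Icc_subset_Icc_right hτ.2

lemma Jp_hasDerivAt (n : ℕ) {τ σ h : ℝ} (hτ : τ ∈ Set.Icc (0:ℝ) 1)
    (hσ : σ ∈ Set.Icc (0:ℝ) 1) (hh : h ∈ s) :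
    HasDerivAt (fun x => Jp (s ×ˢ T1) Θ n x τ σ) (Jp (s ×ˢ T1) Θ (n + 1) h τ σ) h := by
  obtain ⟨ε, hε, hball⟩ : ∃ ε > 0, closedBall h ε ⊆ s :=
    (Metric.nhds_basis_closedBall.mem_iff).mp (hs.mem_nhds hh)
  obtain ⟨M, hM0, hM⟩ := hpart_exists_bound hs hΘ (n + 1) hball
  have key := intervalIntegral.hasDerivAt_integral_of_dominated_loc_of_deriv_le
    (F := fun x α => hpart (s ×ˢ T1) Θ n (x, α, σ))
    (F' := fun x α => hpart (s ×ˢ T1) Θ (n + 1) (x, α, σ))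
    (x₀ := h) (a := 0) (b := τ) (bound := fun _ => M) (s := ball h ε) (μ := MeasureTheory.volume) (ball_mem_nhds h hε)
    ?_ ?_ ?_ ?_ ?_ ?_
  · exact key.2
  · filter_upwards [hs.mem_nhds hh] with x hx
    exact (((hpart_slice_contOn hs hΘ n hx hσ).mono (uIoc_sub_Icc' hτ))).aestronglyMeasurable
      measurableSet_uIoc
  · exact ((hpart_slice_contOn hs hΘ n hh hσ).mono (uIcc_sub_Icc' hτ)).intervalIntegrable
  · exact (((hpart_slice_contOn hs hΘ (n + 1) hh hσ).mono
      (uIoc_sub_Icc' hτ))).aestronglyMeasurable measurableSet_uIoc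
  · refine Filter.Eventually.of_forall fun α => fun hα x hx => ?_
    rw [Real.norm_eq_abs]
    exact hM x (ball_subset_closedBall hx) α (uIoc_sub_Icc' hτ hα) σ hσ
  · exact intervalIntegrable_const
  · refine Filter.Eventually.of_forall fun α => fun hα x hx => ?_
    exact hpart_hasDerivAt hs (hpart_udo hs hΘ) hΘ n
      (Set.mk_mem_prod (uIoc_sub_Icc' hτ hα) hσ) (hball (ball_subset_closedBall hx))

lemma Jp_continuousOn_sigma (n : ℕ) {h τ : ℝ} (hh : h ∈ s) (hτ : τ ∈ Set.Icc (0:ℝ) 1) :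
    ContinuousOn (fun σ => Jp (s ×ˢ T1) Θ n h τ σ) (Set.Icc (0:ℝ) 1) := by
  have hball : closedBall h 0 ⊆ s := by simp [hh]
  obtain ⟨M, hM0, hM⟩ := hpart_exists_bound hs hΘ n hball
  intro σ₀ hσ₀
  apply intervalIntegral.continuousWithinAt_of_dominated_interval (bound := fun _ => M)
  · filter_upwards [self_mem_nhdsWithin] with σ hσ
    exact (((hpart_slice_contOn hs hΘ n hh hσ).mono (uIoc_sub_Icc' hτ))).aestronglyMeasurable
      measurableSet_uIoc
  · filter_upwards [self_mem_nhdsWithin] with σ hσ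
    refine Filter.Eventually.of_forall fun α hα => ?_
    rw [Real.norm_eq_abs]
    exact hM h (mem_closedBall_self le_rfl) α (uIoc_sub_Icc' hτ hα) σ hσ
  · exact intervalIntegrable_const
  · refine Filter.Eventually.of_forall fun α hα => ?_
    exact (hpart_slice_contOn_sigma hs hΘ n hh (uIoc_sub_Icc' hτ hα)) σ₀ hσ₀

lemma Fp_hasDerivAt (n : ℕ) {τ h : ℝ} (hτ : τ ∈ Set.Icc (0:ℝ) 1) (hh : h ∈ s) :
    HasDerivAt (fun x => Fp (s ×ˢ T1) Θ n x τ) (Fp (s ×ˢ T1) Θ (n + 1) h τ) h := by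
  obtain ⟨ε, hε, hball⟩ : ∃ ε > 0, closedBall h ε ⊆ s :=
    (Metric.nhds_basis_closedBall.mem_iff).mp (hs.mem_nhds hh)
  obtain ⟨M, hM0, hM⟩ := hpart_exists_bound hs hΘ (n + 1) hball
  have hi01 : (1:ℝ) ∈ Set.Icc (0:ℝ) 1 := by constructor <;> norm_num
  have key := intervalIntegral.hasDerivAt_integral_of_dominated_loc_of_deriv_le
    (F := fun x σ => Jp (s ×ˢ T1) Θ n x τ σ)
    (F' := fun x σ => Jp (s ×ˢ T1) Θ (n + 1) x τ σ)
    (x₀ := h) (a := 0) (b := 1) (bound := fun _ => M) (s := ball h ε) (μ := MeasureTheory.volume) (ball_mem_nhds h hε)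
    ?_ ?_ ?_ ?_ ?_ ?_
  · exact key.2
  · filter_upwards [hs.mem_nhds hh] with x hx
    exact ((Jp_continuousOn_sigma hs hΘ n hx hτ).mono (uIoc_sub_Icc' hi01)).aestronglyMeasurable
      measurableSet_uIoc
  · exact ((Jp_continuousOn_sigma hs hΘ n hh hτ).mono (uIcc_sub_Icc' hi01)).intervalIntegrable
  · exact ((Jp_continuousOn_sigma hs hΘ (n + 1) hh hτ).mono
      (uIoc_sub_Icc' hi01)).aestronglyMeasurable measurableSet_uIoc
  · refine Filter.Eventually.of_forall fun σ hσ x hx => ?_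
    have hb : ∀ α ∈ Set.uIoc (0:ℝ) τ, ‖hpart (s ×ˢ T1) Θ (n + 1) (x, α, σ)‖ ≤ M := fun α hα => by
      rw [Real.norm_eq_abs]
      exact hM x (ball_subset_closedBall hx) α (uIoc_sub_Icc' hτ hα) σ (uIoc_sub_Icc' hi01 hσ)
    calc ‖Jp (s ×ˢ T1) Θ (n + 1) x τ σ‖ ≤ M * |τ - 0| :=
          intervalIntegral.norm_integral_le_of_norm_le_const hb
      _ ≤ M * 1 := by
          apply mul_le_mul_of_nonneg_left _ hM0
          rw [sub_zero, abs_of_nonneg hτ.1]; exact hτ.2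
      _ = M := mul_one M
  · exact intervalIntegrable_const
  · refine Filter.Eventually.of_forall fun σ hσ x hx => ?_
    exact Jp_hasDerivAt hs hΘ n hτ (uIoc_sub_Icc' hi01 hσ) (hball (ball_subset_closedBall hx))

lemma Fp_dseq {τ : ℝ} (hτ : τ ∈ Set.Icc (0:ℝ) 1) :
    DSeq s (fun n h => Fp (s ×ˢ T1) Θ n h τ) :=
  fun n x hx => Fp_hasDerivAt hs hΘ n hτ hx

end Integrals

section Comp

variable {d : ℕ}

/-- Main composition lemma: iterated `h`-derivatives at `0` of a smooth function of `U`
are polynomials in `σ`, given that those of `U` itself are. -/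
lemma comp_poly {s : Set ℝ} (hs : IsOpen s) (h0 : (0:ℝ) ∈ s)
    {U : ℝ → ℝ → EuclideanSpace ℝ (Fin d)} {y₀ : EuclideanSpace ℝ (Fin d)}
    (hUs : ∀ σ ∈ Set.Icc (0:ℝ) 1, ContDiffOn ℝ (⊤ : ℕ∞) (fun h => U h σ) s)
    (hU0 : ∀ σ ∈ Set.Icc (0:ℝ) 1, U 0 σ = y₀) {N : ℕ}
    (hY : ∀ k ≤ N, ∀ i : Fin d, PolyOn k (fun σ => iteratedDeriv k (fun h => U h σ i) 0)) :
    ∀ n ≤ N, ∀ φ : EuclideanSpace ℝ (Fin d) → ℝ, ContDiff ℝ (⊤ : ℕ∞) φ →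
      PolyOn n (fun σ => iteratedDeriv n (fun h => φ (U h σ)) 0) := by
  intro n
  induction n using Nat.strong_induction_on with
  | _ n IH =>
    intro hnN φ hφ
    match n with
    | 0 =>
      refine (polyOn_const 0 (φ y₀)).congr fun σ hσ => ?_
      simp [iteratedDeriv_zero, hU0 σ hσ]
    | (m + 1) =>
      -- the partial functions ψ i
      set ψ : Fin d → EuclideanSpace ℝ (Fin d) → ℝ :=
        fun i z => fderiv ℝ φ z (EuclideanSpace.single i (1:ℝ)) with hψdef
      have hψ : ∀ i, ContDiff ℝ (⊤ : ℕ∞) (ψ i) := fun i =>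
        (hφ.fderiv_right (by simp)).clm_apply contDiff_const
      -- key pointwise rewrite of the iterated derivative
      have key : ∀ σ ∈ Set.Icc (0:ℝ) 1,
          iteratedDeriv (m + 1) (fun h => φ (U h σ)) 0
            = ∑ i : Fin d, ∑ j ∈ Finset.range (m + 1), (m.choose j : ℝ) *
                (iteratedDeriv j (fun h => ψ i (U h σ)) 0 *
                  iteratedDeriv (m - j + 1) (fun h => U h σ i) 0) := by
        intro σ hσ
        have huσ : ContDiffOn ℝ (⊤ : ℕ∞) (fun h => U h σ) s := hUs σ hσ
        have hcomp : ContDiffOn ℝ (⊤ : ℕ∞) (fun h => φ (U h σ)) s :=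
          hφ.comp_contDiffOn huσ
        have hψcomp : ∀ i, ContDiffOn ℝ (⊤ : ℕ∞) (fun h => ψ i (U h σ)) s := fun i =>
          (hψ i).comp_contDiffOn huσ
        have hcoord : ∀ i : Fin d, ContDiffOn ℝ (⊤ : ℕ∞) (fun h => U h σ i) s := fun i => by
          have := ((EuclideanSpace.proj (𝕜 := ℝ) i).contDiff).comp_contDiffOn huσ
          simpa [Function.comp_def] using this
        -- the chain rule on s
        have hchain : ∀ x ∈ s, HasDerivAt (fun h => φ (U h σ))
            (∑ i : Fin d, ψ i (U x σ) * deriv (fun h => U h σ i) x) x := by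
          intro x hx
          have hdiff : DifferentiableAt ℝ (fun h => U h σ) x :=
            (huσ.differentiableOn (by simp) x hx).differentiableAt (hs.mem_nhds hx)
          have hU' : HasDerivAt (fun h => U h σ) (deriv (fun h => U h σ) x) x :=
            hdiff.hasDerivAt
          have hφ' : HasFDerivAt φ (fderiv ℝ φ (U x σ)) (U x σ) :=
            (hφ.differentiable (by simp) (U x σ)).hasFDerivAt
          have := hφ'.comp_hasDerivAt x hU'
          convert this using 1
          · rfl
          · rfl
          · rfl
          -- expand fderiv applied to the vector in coordinates
          have hv : deriv (fun h => U h σ) x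
              = ∑ i : Fin d, (deriv (fun h => U h σ) x i) • EuclideanSpace.single i (1:ℝ) := by
            ext j
            rw [WithLp.ofLp_sum, Finset.sum_apply]
            simp only [PiLp.smul_apply, EuclideanSpace.single_apply, smul_eq_mul,
              mul_ite, mul_one, mul_zero]
            rw [Finset.sum_ite_eq Finset.univ j (fun i => deriv (fun h => U h σ) x i)]
            simp
          rw [hv, map_sum]
          refine Finset.sum_congr rfl fun i _ => ?_
          rw [ContinuousLinearMap.map_smul]
          have hdc : deriv (fun h => U h σ i) x = deriv (fun h => U h σ) x i := by
            have : HasDerivAt (fun h => U h σ i) (deriv (fun h => U h σ) x i) x :=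
              ((EuclideanSpace.proj (𝕜 := ℝ) i).hasFDerivAt).comp_hasDerivAt x hU'
            exact this.deriv
          rw [hdc]
          simp [smul_eq_mul, hψdef]
          ring
        -- replace deriv (φ ∘ u) by the sum on a neighborhood of 0
        rw [iteratedDeriv_succ']
        have hEq : deriv (fun h => φ (U h σ)) =ᶠ[nhds 0]
            (fun x => ∑ i : Fin d, ψ i (U x σ) * deriv (fun h => U h σ i) x) :=
          Filter.eventually_of_mem (hs.mem_nhds h0) fun x hx => (hchain x hx).deriv
        rw [hEq.iteratedDeriv_eq m]
        -- now express via DSeq machinery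
        have hdseq : ∀ i : Fin d, DSeq s (lconv
            (fun k => iteratedDeriv k (fun h => ψ i (U h σ)))
            (fun k => iteratedDeriv (k + 1) (fun h => U h σ i))) := fun i =>
          DSeq.lconv (dseq_of_contDiffOn hs (hψcomp i))
            ((dseq_of_contDiffOn hs (hcoord i)).shift)
        have hsum := (DSeq.sum Finset.univ (fun i _ => hdseq i)).iteratedDeriv_eq hs m 0 h0
        have h00 : (fun x => ∑ i : Fin d, ψ i (U x σ) * deriv (fun h => U h σ i) x)
            = (fun x => ∑ i : Fin d, lconv
              (fun k => iteratedDeriv k (fun h => ψ i (U h σ)))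
              (fun k => iteratedDeriv (k + 1) (fun h => U h σ i)) 0 x) := by
          funext x
          refine Finset.sum_congr rfl fun i _ => ?_
          simp [lconv, iteratedDeriv_zero, iteratedDeriv_one]
        rw [h00, hsum]
        simp only [lconv]
      -- now the polynomial structure
      have hbig : PolyOn (m + 1) (fun σ => ∑ i : Fin d, ∑ j ∈ Finset.range (m + 1),
          (m.choose j : ℝ) * (iteratedDeriv j (fun h => ψ i (U h σ)) 0 *
            iteratedDeriv (m - j + 1) (fun h => U h σ i) 0)) := by
        refine polyOn_sum Finset.univ _ fun i _ => ?_
        refine polyOn_sum (Finset.range (m + 1)) _ fun j hj => ?_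
        have hjm : j ≤ m := Nat.lt_succ_iff.mp (Finset.mem_range.mp hj)
        refine PolyOn.const_mul _ ?_
        have h1 : PolyOn j (fun σ => iteratedDeriv j (fun h => ψ i (U h σ)) 0) :=
          IH j (Nat.lt_succ_of_le hjm) (le_trans (Nat.le_succ_of_le hjm) hnN) (ψ i) (hψ i)
        have h2 : PolyOn (m - j + 1) (fun σ => iteratedDeriv (m - j + 1) (fun h => U h σ i) 0) :=
          hY (m - j + 1) (le_trans (by omega) hnN) i
        have := h1.mul h2
        exact this.mono (by omega)
      exact hbig.congr key

end Comp


section Helpers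

variable {E F : Type*} [NormedAddCommGroup E] [NormedSpace ℝ E]
  [NormedAddCommGroup F] [NormedSpace ℝ F]

lemma iteratedDeriv_clm_comp (L : E →L[ℝ] F) {s : Set ℝ} (hs : IsOpen s) {f : ℝ → E}
    (hf : ContDiffOn ℝ (⊤ : ℕ∞) f s) (n : ℕ) {x : ℝ} (hx : x ∈ s) :
    iteratedDeriv n (fun y => L (f y)) x = L (iteratedDeriv n f x) := by
  have hd := dseq_of_contDiffOn hs hf
  have hLd : DSeq s (fun k x => L (iteratedDeriv k f x)) := by
    intro k y hy
    have := L.hasFDerivAt.comp_hasDerivAt y (hd k y hy)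
    simpa [Function.comp_def] using this
  have := hLd.iteratedDeriv_eq hs n x hx
  simpa [iteratedDeriv_zero] using this

lemma itD_const_add (n : ℕ) (c : ℝ) (g : ℝ → ℝ) :
    iteratedDeriv (n + 1) (fun x => c + g x) = iteratedDeriv (n + 1) g := by
  rw [iteratedDeriv_succ', iteratedDeriv_succ']
  rw [deriv_const_add' (f := g) c]

noncomputable def idseq : ℕ → ℝ → ℝ := fun k x => if k = 0 then x else if k = 1 then 1 else 0

lemma idseq_dseq (s : Set ℝ) : DSeq s idseq := by
  intro k x _
  match k with
  | 0 => unfold idseq; simpa using (hasDerivAt_id' x)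
  | 1 => unfold idseq; simpa using (hasDerivAt_const x (1:ℝ))
  | (n+2) => unfold idseq; simpa using (hasDerivAt_const x (0:ℝ))

end Helpers

/-- **Regularity of the FFEP solution (Lemma 5.1).**
If `U(h,τ)` smoothly solves the FFEP integral equation
`U(h,τ) = y₀ + h ∫₀¹ (∫₀^τ K(h,α,σ) B(U(h,α)) dα) G(U(h,σ)) dσ` and the kernel `K` is
regular (its `n`-th `h`-derivatives at `0` are polynomials of degree `≤ n` in `τ` and `σ`),
then each `(1/m!) ∂^m U/∂h^m (0, ·)` has polynomial components of degree `≤ m` in `τ`. -/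
theorem ffep_solution_regular
    (d r : ℕ) (hd : 1 ≤ d) (hr : 1 ≤ r)
    (y₀ : EuclideanSpace ℝ (Fin d)) (δ : ℝ) (hδ : 0 < δ)
    (U : ℝ → ℝ → EuclideanSpace ℝ (Fin d)) (K : ℝ → ℝ → ℝ → ℝ)
    (B : EuclideanSpace ℝ (Fin d) → Matrix (Fin d) (Fin d) ℝ)
    (G : EuclideanSpace ℝ (Fin d) → EuclideanSpace ℝ (Fin d))
    (hU : ContDiffOn ℝ (⊤ : ℕ∞) (fun p : ℝ × ℝ => U p.1 p.2)
      (Set.Ioo (-δ) δ ×ˢ Set.Icc (0:ℝ) 1))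
    (hK : ContDiffOn ℝ (⊤ : ℕ∞) (fun p : ℝ × ℝ × ℝ => K p.1 p.2.1 p.2.2)
      (Set.Ioo (-δ) δ ×ˢ Set.Icc (0:ℝ) 1 ×ˢ Set.Icc (0:ℝ) 1))
    (hB : ContDiff ℝ (⊤ : ℕ∞) fun (y : EuclideanSpace ℝ (Fin d)) (i j : Fin d) => B y i j)
    (hG : ContDiff ℝ (⊤ : ℕ∞) G)
    (heq : ∀ h ∈ Set.Ioo (-δ) δ, ∀ τ ∈ Set.Icc (0:ℝ) 1,
      U h τ = y₀ + h • (∫ σ in (0:ℝ)..1,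
        WithLp.toLp 2 (Matrix.mulVec
          (Matrix.of (∫ α in (0:ℝ)..τ, fun i j : Fin d => K h α σ * B (U h α) i j))
          (fun i => G (U h σ) i)) : EuclideanSpace ℝ (Fin d)))
    (hKreg : ∀ n : ℕ, n ≤ r - 1 → ∃ c : Fin (n + 1) → Fin (n + 1) → ℝ,
      ∀ τ ∈ Set.Icc (0:ℝ) 1, ∀ σ ∈ Set.Icc (0:ℝ) 1,
        iteratedDeriv n (fun h => K h τ σ) 0
          = ∑ i, ∑ j, c i j * τ ^ (i : ℕ) * σ ^ (j : ℕ)) :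
    ∀ m : ℕ, m ≤ r - 1 → ∀ i : Fin d, ∃ c : Fin (m + 1) → ℝ,
      ∀ τ ∈ Set.Icc (0:ℝ) 1,
        (1 / (Nat.factorial m) : ℝ) * iteratedDeriv m (fun h => U h τ) 0 i
          = ∑ k, c k * τ ^ (k : ℕ) := by
  have hs : IsOpen (Set.Ioo (-δ) δ) := isOpen_Ioo
  have h0 : (0:ℝ) ∈ Set.Ioo (-δ) δ := ⟨by linarith, hδ⟩
  -- smoothness of slices of U in h
  have hUs : ∀ σ ∈ Set.Icc (0:ℝ) 1, ContDiffOn ℝ (⊤ : ℕ∞) (fun h => U h σ) (Set.Ioo (-δ) δ) := by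
    intro σ hσ
    have := hU.comp ((contDiff_id.prodMk contDiff_const).contDiffOn)
      (fun h (hh : h ∈ Set.Ioo (-δ) δ) => Set.mk_mem_prod hh hσ)
    simpa [Function.comp_def] using this
  have hU0 : ∀ τ ∈ Set.Icc (0:ℝ) 1, U 0 τ = y₀ := by
    intro τ hτ
    simpa using heq 0 h0 τ hτ
  -- component smoothness of B and G
  have hB' : ∀ i j : Fin d, ContDiff ℝ (⊤ : ℕ∞) (fun y => B y i j) := fun i j =>
    contDiff_pi.mp (contDiff_pi.mp hB i) j
  have hG' : ∀ j : Fin d, ContDiff ℝ (⊤ : ℕ∞) (fun y => G y j) := by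
    intro j
    have := (EuclideanSpace.proj (𝕜 := ℝ) j).contDiff.comp hG
    simpa [Function.comp_def] using this
  -- the integrand Θ i
  set Θ : Fin d → ℝ × ℝ × ℝ → ℝ := fun i p =>
    ∑ j : Fin d, (K p.1 p.2.1 p.2.2 * B (U p.1 p.2.1) i j) * G (U p.1 p.2.2) j with hΘdef
  have hΘ : ∀ i : Fin d, ContDiffOn ℝ (⊤ : ℕ∞) (Θ i) (Set.Ioo (-δ) δ ×ˢ T1) := by
    intro i
    apply ContDiffOn.sum
    intro j _
    have hπ12 : ContDiff ℝ (⊤ : ℕ∞) (fun p : ℝ × ℝ × ℝ => (p.1, p.2.1)) :=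
      contDiff_fst.prodMk (contDiff_fst.comp contDiff_snd)
    have hπ13 : ContDiff ℝ (⊤ : ℕ∞) (fun p : ℝ × ℝ × ℝ => (p.1, p.2.2)) :=
      contDiff_fst.prodMk (contDiff_snd.comp contDiff_snd)
    have hU12 : ContDiffOn ℝ (⊤ : ℕ∞) (fun p : ℝ × ℝ × ℝ => U p.1 p.2.1)
        (Set.Ioo (-δ) δ ×ˢ T1) := by
      have := hU.comp hπ12.contDiffOn
        (fun p (hp : p ∈ Set.Ioo (-δ) δ ×ˢ T1) => Set.mk_mem_prod hp.1 hp.2.1)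
      simpa [Function.comp_def] using this
    have hU13 : ContDiffOn ℝ (⊤ : ℕ∞) (fun p : ℝ × ℝ × ℝ => U p.1 p.2.2)
        (Set.Ioo (-δ) δ ×ˢ T1) := by
      have := hU.comp hπ13.contDiffOn
        (fun p (hp : p ∈ Set.Ioo (-δ) δ ×ˢ T1) => Set.mk_mem_prod hp.1 hp.2.2)
      simpa [Function.comp_def] using this
    have hBc : ContDiffOn ℝ (⊤ : ℕ∞) (fun p : ℝ × ℝ × ℝ => B (U p.1 p.2.1) i j)
        (Set.Ioo (-δ) δ ×ˢ T1) := (hB' i j).comp_contDiffOn hU12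
    have hGc : ContDiffOn ℝ (⊤ : ℕ∞) (fun p : ℝ × ℝ × ℝ => G (U p.1 p.2.2) j)
        (Set.Ioo (-δ) δ ×ˢ T1) := (hG' j).comp_contDiffOn hU13
    exact (hK.mul hBc).mul hGc
  -- the integral equation, componentwise and in terms of Fp
  have hEqn : ∀ h ∈ Set.Ioo (-δ) δ, ∀ τ ∈ Set.Icc (0:ℝ) 1, ∀ i : Fin d,
      U h τ i = y₀ i + h * Fp (Set.Ioo (-δ) δ ×ˢ T1) (Θ i) 0 h τ := by
    intro h hh τ hτ i
    have hVeq := heq h hh τ hτ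
    have h1m : (1:ℝ) ∈ Set.Icc (0:ℝ) 1 := ⟨zero_le_one, le_rfl⟩
    -- continuity of various slice functions
    have hUαc : ContinuousOn (fun α => U h α) (Set.Icc (0:ℝ) 1) := by
      have := hU.continuousOn.comp (Continuous.continuousOn (by fun_prop) :
          ContinuousOn (fun α : ℝ => (h, α)) (Set.Icc (0:ℝ) 1))
        (fun α hα => Set.mk_mem_prod hh hα)
      simpa [Function.comp_def] using this
    have hKαc : ∀ σ ∈ Set.Icc (0:ℝ) 1, ContinuousOn (fun α => K h α σ) (Set.Icc (0:ℝ) 1) := by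
      intro σ hσ
      have := hK.continuousOn.comp (Continuous.continuousOn (by fun_prop) :
          ContinuousOn (fun α : ℝ => (h, α, σ)) (Set.Icc (0:ℝ) 1))
        (fun α hα => Set.mk_mem_prod hh (Set.mk_mem_prod hα hσ))
      simpa [Function.comp_def] using this
    -- Step A : the inner matrix integral, componentwise
    have stepA : ∀ σ ∈ Set.Icc (0:ℝ) 1, ∀ i' : Fin d,
        Matrix.mulVec
          (Matrix.of (∫ α in (0:ℝ)..τ, fun i'' j : Fin d => K h α σ * B (U h α) i'' j))
          (fun j => G (U h σ) j) i'
        = Jp (Set.Ioo (-δ) δ ×ˢ T1) (Θ i') 0 h τ σ := by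
      intro σ hσ i'
      have hmatc : ContinuousOn (fun α => (fun i'' j : Fin d => K h α σ * B (U h α) i'' j))
          (Set.Icc (0:ℝ) 1) := by
        apply continuousOn_pi.2
        intro i''
        apply continuousOn_pi.2
        intro j
        exact (hKαc σ hσ).mul (((hB' i'' j).continuous.comp_continuousOn hUαc))
      have hmat_int : IntervalIntegrable
          (fun α => (fun i'' j : Fin d => K h α σ * B (U h α) i'' j)) volume 0 τ :=
        (hmatc.mono (uIcc_sub_Icc' hτ)).intervalIntegrable
      have hentry : ∀ j : Fin d,
          (∫ α in (0:ℝ)..τ, fun i'' j' : Fin d => K h α σ * B (U h α) i'' j') i' j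
            = ∫ α in (0:ℝ)..τ, K h α σ * B (U h α) i' j := by
        intro j
        have hcc := (((ContinuousLinearMap.proj (R := ℝ) (φ := fun _ : Fin d => ℝ) j).comp
          (ContinuousLinearMap.proj (R := ℝ) (φ := fun _ : Fin d => Fin d → ℝ) i')).intervalIntegral_comp_comm
          hmat_int)
        simpa using hcc.symm
      have hint_j : ∀ j : Fin d, IntervalIntegrable
          (fun α => (K h α σ * B (U h α) i' j) * G (U h σ) j) volume 0 τ := by
        intro j
        apply ContinuousOn.intervalIntegrable
        apply ContinuousOn.mul _ continuousOn_const
        exact (((hKαc σ hσ).mul (((hB' i' j).continuous.comp_continuousOn hUαc))).mono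
          (uIcc_sub_Icc' hτ))
      have e1 : Matrix.mulVec
          (Matrix.of (∫ α in (0:ℝ)..τ, fun i'' j : Fin d => K h α σ * B (U h α) i'' j))
          (fun j => G (U h σ) j) i'
          = ∑ j : Fin d, (∫ α in (0:ℝ)..τ, fun i'' j' : Fin d => K h α σ * B (U h α) i'' j') i' j
              * G (U h σ) j := by
        simp [Matrix.mulVec, dotProduct]
      have e2 : ∀ j : Fin d, (∫ α in (0:ℝ)..τ, fun i'' j' : Fin d => K h α σ * B (U h α) i'' j') i' j
          * G (U h σ) j = ∫ α in (0:ℝ)..τ, (K h α σ * B (U h α) i' j) * G (U h σ) j := by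
        intro j
        rw [hentry j, intervalIntegral.integral_mul_const]
      rw [e1, Finset.sum_congr rfl (fun j _ => e2 j),
        ← intervalIntegral.integral_finset_sum (fun j _ => hint_j j)]
      simp only [Jp, hpart, hΘdef]
    -- Step B/C : the outer integral, componentwise
    set W' : ℝ → EuclideanSpace ℝ (Fin d) := fun σ =>
      (EuclideanSpace.equiv (Fin d) ℝ).symm
        (fun i' => Jp (Set.Ioo (-δ) δ ×ˢ T1) (Θ i') 0 h τ σ) with hW'def
    have hW'app : ∀ σ i', W' σ i' = Jp (Set.Ioo (-δ) δ ×ˢ T1) (Θ i') 0 h τ σ := by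
      intro σ i'; rfl
    have hW'cont : ContinuousOn W' (Set.Icc (0:ℝ) 1) := by
      have hpi : ContinuousOn (fun σ => (fun i' => Jp (Set.Ioo (-δ) δ ×ˢ T1) (Θ i') 0 h τ σ))
          (Set.Icc (0:ℝ) 1) :=
        continuousOn_pi.2 (fun i' => Jp_continuousOn_sigma hs (hΘ i') 0 hh hτ)
      exact ((EuclideanSpace.equiv (Fin d) ℝ).symm.continuous.comp_continuousOn hpi)
    have hVW : (∫ σ in (0:ℝ)..1,
        WithLp.toLp 2 (Matrix.mulVec
          (Matrix.of (∫ α in (0:ℝ)..τ, fun i'' j : Fin d => K h α σ * B (U h α) i'' j))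
          (fun j => G (U h σ) j)) : EuclideanSpace ℝ (Fin d))
        = ∫ σ in (0:ℝ)..1, W' σ := by
      apply intervalIntegral.integral_congr
      intro σ hσ
      have hσ' : σ ∈ Set.Icc (0:ℝ) 1 := uIcc_sub_Icc' h1m hσ
      ext i'
      rw [hW'app σ i']
      exact stepA σ hσ' i'
    have hproj : (∫ σ in (0:ℝ)..1, W' σ) i
        = ∫ σ in (0:ℝ)..1, Jp (Set.Ioo (-δ) δ ×ˢ T1) (Θ i) 0 h τ σ := by
      have hwint : IntervalIntegrable W' volume 0 1 :=
        (hW'cont.mono (uIcc_sub_Icc' h1m)).intervalIntegrable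
      have hpc := (EuclideanSpace.proj (𝕜 := ℝ) i).intervalIntegral_comp_comm hwint
      rw [show (∫ σ in (0:ℝ)..1, W' σ) i
          = (EuclideanSpace.proj (𝕜 := ℝ) i) (∫ σ in (0:ℝ)..1, W' σ) from rfl, ← hpc]
      apply intervalIntegral.integral_congr
      intro σ _
      rfl
    rw [hVeq]
    have : (y₀ + h • (∫ σ in (0:ℝ)..1,
        WithLp.toLp 2 (Matrix.mulVec
          (Matrix.of (∫ α in (0:ℝ)..τ, fun i'' j : Fin d => K h α σ * B (U h α) i'' j))
          (fun j => G (U h σ) j)) : EuclideanSpace ℝ (Fin d))) i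
        = y₀ i + h * ((∫ σ in (0:ℝ)..1,
        WithLp.toLp 2 (Matrix.mulVec
          (Matrix.of (∫ α in (0:ℝ)..τ, fun i'' j : Fin d => K h α σ * B (U h α) i'' j))
          (fun j => G (U h σ) j)) : EuclideanSpace ℝ (Fin d)) i) := by
      simp [PiLp.add_apply, PiLp.smul_apply, smul_eq_mul]
    rw [this, hVW, hproj]
    simp [Fp]
  -- main induction
  have main : ∀ m : ℕ, m ≤ r - 1 → ∀ i : Fin d,
      PolyOn m (fun τ => iteratedDeriv m (fun h => U h τ i) 0) := by
    intro m
    induction m using Nat.strong_induction_on with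
    | _ m IH =>
      intro hmr i
      match m with
      | 0 =>
        refine (polyOn_const 0 (y₀ i)).congr fun τ hτ => ?_
        simp only [iteratedDeriv_zero]
        rw [hU0 τ hτ]
      | (m + 1) =>
        -- the big computation : Fp m 0 τ is polynomial of degree ≤ m + 1
        have hFpPoly : PolyOn (m + 1) (fun τ => Fp (Set.Ioo (-δ) δ ×ˢ T1) (Θ i) m 0 τ) := by
          have hY : ∀ k ≤ m, ∀ i' : Fin d,
              PolyOn k (fun σ => iteratedDeriv k (fun h => U h σ i') 0) :=
            fun k hk i' => IH k (by omega) (by omega) i'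
          have hcomp := comp_poly hs h0 hUs hU0 hY
          -- polynomial representations for the composite factors
          have hbf : ∀ (j : Fin d) (b : ℕ), b ≤ m → ∃ p : Polynomial ℝ, p.natDegree ≤ b ∧
              ∀ α ∈ Set.Icc (0:ℝ) 1, iteratedDeriv b (fun h => B (U h α) i j) 0
                = Polynomial.eval α p :=
            fun j b hb => hcomp b hb (fun y => B y i j) (hB' i j)
          choose! pb hpbdeg hpbeq using hbf
          have hgf : ∀ (j : Fin d) (b : ℕ), b ≤ m → ∃ p : Polynomial ℝ, p.natDegree ≤ b ∧
              ∀ σ ∈ Set.Icc (0:ℝ) 1, iteratedDeriv b (fun h => G (U h σ) j) 0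
                = Polynomial.eval σ p :=
            fun j b hb => hcomp b hb (fun y => G y j) (hG' j)
          choose! pg hpgdeg hpgeq using hgf
          -- coefficient representation of the kernel derivatives
          have hkf : ∀ a : ℕ, a ≤ m → ∃ c : ℕ → ℕ → ℝ,
              (∀ p q : ℕ, a < p ∨ a < q → c p q = 0) ∧
              ∀ α ∈ Set.Icc (0:ℝ) 1, ∀ σ ∈ Set.Icc (0:ℝ) 1,
                iteratedDeriv a (fun h => K h α σ) 0
                  = ∑ p ∈ Finset.range (m + 1), ∑ q ∈ Finset.range (m + 1),
                      c p q * α ^ p * σ ^ q := by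
            intro a ha
            obtain ⟨c', hc'⟩ := hKreg a (by omega)
            refine ⟨fun p q => if hp : p < a + 1 then if hq : q < a + 1 then
              c' ⟨p, hp⟩ ⟨q, hq⟩ else 0 else 0, ?_, ?_⟩
            · intro p q hpq
              show (if hp : p < a + 1 then if hq : q < a + 1 then
                c' ⟨p, hp⟩ ⟨q, hq⟩ else 0 else 0) = 0
              rcases hpq with h1 | h1
              · rw [dif_neg (by omega)]
              · by_cases hp : p < a + 1
                · rw [dif_pos hp, dif_neg (by omega)]
                · rw [dif_neg hp]
            · intro α hα σ hσ
              rw [hc' α hα σ hσ]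
              have e1 : ∑ p ∈ Finset.range (m + 1), ∑ q ∈ Finset.range (m + 1),
                  (if hp : p < a + 1 then if hq : q < a + 1 then
                    c' ⟨p, hp⟩ ⟨q, hq⟩ else 0 else 0) * α ^ p * σ ^ q
                  = ∑ p ∈ Finset.range (a + 1), ∑ q ∈ Finset.range (a + 1),
                    (if hp : p < a + 1 then if hq : q < a + 1 then
                      c' ⟨p, hp⟩ ⟨q, hq⟩ else 0 else 0) * α ^ p * σ ^ q := by
                rw [← Finset.sum_subset (Finset.range_subset_range.2 (by omega : a + 1 ≤ m + 1))]
                · refine Finset.sum_congr rfl fun p hp => ?_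
                  rw [← Finset.sum_subset (Finset.range_subset_range.2 (by omega : a + 1 ≤ m + 1))]
                  intro q _ hq
                  rw [Finset.mem_range, not_lt] at hq
                  by_cases hp' : p < a + 1
                  · rw [dif_pos hp', dif_neg (by omega)]; ring
                  · rw [dif_neg hp']; ring
                · intro p _ hp
                  rw [Finset.mem_range, not_lt] at hp
                  refine Finset.sum_eq_zero fun q _ => ?_
                  rw [dif_neg (by omega)]; ring
              rw [e1]
              rw [← Fin.sum_univ_eq_sum_range (fun p => ∑ q ∈ Finset.range (a + 1),
                (if hp : p < a + 1 then if hq : q < a + 1 then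
                  c' ⟨p, hp⟩ ⟨q, hq⟩ else 0 else 0) * α ^ p * σ ^ q) (a + 1)]
              refine Finset.sum_congr rfl fun p _ => ?_
              rw [← Fin.sum_univ_eq_sum_range (fun q =>
                (if hp : (p : ℕ) < a + 1 then if hq : q < a + 1 then
                  c' ⟨(p : ℕ), hp⟩ ⟨q, hq⟩ else 0 else 0) * α ^ (p : ℕ) * σ ^ q) (a + 1)]
              refine Finset.sum_congr rfl fun q _ => ?_
              rw [dif_pos p.isLt, dif_pos q.isLt]
          choose! ck hck0 hckeq using hkf
          -- smoothness of the scalar slices in h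
          have hKslice : ∀ α ∈ Set.Icc (0:ℝ) 1, ∀ σ ∈ Set.Icc (0:ℝ) 1,
              ContDiffOn ℝ (⊤ : ℕ∞) (fun h => K h α σ) (Set.Ioo (-δ) δ) := by
            intro α hα σ hσ
            have := hK.comp ((contDiff_id.prodMk contDiff_const).contDiffOn)
              (fun h (hh : h ∈ Set.Ioo (-δ) δ) =>
                Set.mk_mem_prod hh (Set.mk_mem_prod hα hσ))
            simpa [Function.comp_def] using this
          have hBslice : ∀ (j : Fin d), ∀ α ∈ Set.Icc (0:ℝ) 1,
              ContDiffOn ℝ (⊤ : ℕ∞) (fun h => B (U h α) i j) (Set.Ioo (-δ) δ) :=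
            fun j α hα => (hB' i j).comp_contDiffOn (hUs α hα)
          have hGslice : ∀ (j : Fin d), ∀ σ ∈ Set.Icc (0:ℝ) 1,
              ContDiffOn ℝ (⊤ : ℕ∞) (fun h => G (U h σ) j) (Set.Ioo (-δ) δ) :=
            fun j σ hσ => (hG' j).comp_contDiffOn (hUs σ hσ)
          -- pointwise formula for hpart at h = 0
          have hudo := hpart_udo hs (hΘ i)
          have hpoint : ∀ α ∈ Set.Icc (0:ℝ) 1, ∀ σ ∈ Set.Icc (0:ℝ) 1,
              hpart (Set.Ioo (-δ) δ ×ˢ T1) (Θ i) m (0, α, σ)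
                = ∑ j : Fin d, ∑ a ∈ Finset.range (m + 1), (m.choose a : ℝ) *
                    ((∑ v ∈ Finset.range (a + 1), (a.choose v : ℝ) *
                      (iteratedDeriv v (fun h => K h α σ) 0 *
                        iteratedDeriv (a - v) (fun h => B (U h α) i j) 0)) *
                      iteratedDeriv (m - a) (fun h => G (U h σ) j) 0) := by
            intro α hα σ hσ
            have hd1 := (hpart_dseq hs hudo (hΘ i)
              (Set.mk_mem_prod hα hσ)).iteratedDeriv_eq hs m 0 h0
            rw [← hd1]
            have hseq : ∀ j : Fin d, DSeq (Set.Ioo (-δ) δ)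
                (lconv (lconv (fun k => iteratedDeriv k (fun h => K h α σ))
                    (fun k => iteratedDeriv k (fun h => B (U h α) i j)))
                  (fun k => iteratedDeriv k (fun h => G (U h σ) j))) := fun j =>
              ((dseq_of_contDiffOn hs (hKslice α hα σ hσ)).lconv
                (dseq_of_contDiffOn hs (hBslice j α hα))).lconv
                (dseq_of_contDiffOn hs (hGslice j σ hσ))
            have hsum := (DSeq.sum Finset.univ (fun j _ => hseq j)).iteratedDeriv_eq hs m 0 h0
            have h0eq : (fun h => hpart (Set.Ioo (-δ) δ ×ˢ T1) (Θ i) 0 (h, α, σ))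
                = (fun h => ∑ j : Fin d,
                    lconv (lconv (fun k => iteratedDeriv k (fun h => K h α σ))
                        (fun k => iteratedDeriv k (fun h => B (U h α) i j)))
                      (fun k => iteratedDeriv k (fun h => G (U h σ) j)) 0 h) := by
              funext h
              simp [hpart, lconv, iteratedDeriv_zero, hΘdef]
            rw [h0eq, hsum]
            simp only [lconv]
          -- the flat representation
          have hflat : ∀ α ∈ Set.Icc (0:ℝ) 1, ∀ σ ∈ Set.Icc (0:ℝ) 1,
              hpart (Set.Ioo (-δ) δ ×ˢ T1) (Θ i) m (0, α, σ)
                = ∑ z ∈ ((Finset.univ : Finset (Fin d)) ×ˢ Finset.range (m + 1)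
                    ×ˢ Finset.range (m + 1) ×ˢ Finset.range (m + 1)
                    ×ˢ Finset.range (m + 1) ×ˢ Finset.range (m + 1)),
                  ((m.choose z.2.1 : ℝ) * (z.2.1.choose z.2.2.1 : ℝ)
                      * ck z.2.2.1 z.2.2.2.2.1 z.2.2.2.2.2
                      * (pb z.1 (z.2.1 - z.2.2.1)).coeff z.2.2.2.1)
                    * (σ ^ z.2.2.2.2.2 * Polynomial.eval σ (pg z.1 (m - z.2.1)))
                    * α ^ (z.2.2.2.2.1 + z.2.2.2.1) := by
            intro α hα σ hσ
            rw [hpoint α hα σ hσ]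
            simp only [Finset.sum_product]
            refine Finset.sum_congr rfl fun j _ => ?_
            refine Finset.sum_congr rfl fun a hamem => ?_
            have ham : a ≤ m := by
              rw [Finset.mem_range] at hamem; omega
            -- replace the G factor
            rw [hpgeq j (m - a) (by omega) σ hσ]
            -- extend the inner v-sum
            rw [show (∑ v ∈ Finset.range (a + 1), (a.choose v : ℝ) *
                  (iteratedDeriv v (fun h => K h α σ) 0 *
                    iteratedDeriv (a - v) (fun h => B (U h α) i j) 0))
                = ∑ v ∈ Finset.range (m + 1), (a.choose v : ℝ) *
                  (iteratedDeriv v (fun h => K h α σ) 0 *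
                    iteratedDeriv (a - v) (fun h => B (U h α) i j) 0) from
              Finset.sum_subset (Finset.range_subset_range.2 (by omega)) (fun v _ hv => by
                rw [Finset.mem_range, not_lt] at hv
                rw [Nat.choose_eq_zero_of_lt (by omega)]
                push_cast; ring)]
            -- replace K and B factors inside
            rw [Finset.sum_congr rfl (fun v hvmem => by
              have hvm : v ≤ m := by rw [Finset.mem_range] at hvmem; omega
              rw [hckeq v hvm α hα σ hσ, hpbeq j (a - v) (by omega) α hα,
                Polynomial.eval_eq_sum_range' (n := m + 1)
                  (by have := hpbdeg j (a - v) (by omega); omega) α])]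
            -- now pure algebra
            simp only [Finset.sum_mul, Finset.mul_sum]
            refine Finset.sum_congr rfl fun v _ => ?_
            refine Finset.sum_congr rfl fun p _ => ?_
            refine Finset.sum_congr rfl fun q _ => ?_
            refine Finset.sum_congr rfl fun u _ => ?_
            push_cast
            ring
          -- integrate in α
          have hJp : ∀ τ ∈ Set.Icc (0:ℝ) 1, ∀ σ ∈ Set.Icc (0:ℝ) 1,
              Jp (Set.Ioo (-δ) δ ×ˢ T1) (Θ i) m 0 τ σ
                = ∑ z ∈ ((Finset.univ : Finset (Fin d)) ×ˢ Finset.range (m + 1)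
                    ×ˢ Finset.range (m + 1) ×ˢ Finset.range (m + 1)
                    ×ˢ Finset.range (m + 1) ×ˢ Finset.range (m + 1)),
                  ((m.choose z.2.1 : ℝ) * (z.2.1.choose z.2.2.1 : ℝ)
                      * ck z.2.2.1 z.2.2.2.2.1 z.2.2.2.2.2
                      * (pb z.1 (z.2.1 - z.2.2.1)).coeff z.2.2.2.1)
                    * (σ ^ z.2.2.2.2.2 * Polynomial.eval σ (pg z.1 (m - z.2.1)))
                    * (τ ^ (z.2.2.2.2.1 + z.2.2.2.1 + 1) / (z.2.2.2.2.1 + z.2.2.2.1 + 1)) := by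
            intro τ hτ σ hσ
            have hint : ∀ z ∈ ((Finset.univ : Finset (Fin d)) ×ˢ Finset.range (m + 1)
                ×ˢ Finset.range (m + 1) ×ˢ Finset.range (m + 1)
                ×ˢ Finset.range (m + 1) ×ˢ Finset.range (m + 1)), IntervalIntegrable
                (fun α => ((m.choose z.2.1 : ℝ) * (z.2.1.choose z.2.2.1 : ℝ)
                      * ck z.2.2.1 z.2.2.2.2.1 z.2.2.2.2.2
                      * (pb z.1 (z.2.1 - z.2.2.1)).coeff z.2.2.2.1)
                    * (σ ^ z.2.2.2.2.2 * Polynomial.eval σ (pg z.1 (m - z.2.1)))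
                    * α ^ (z.2.2.2.2.1 + z.2.2.2.1)) MeasureTheory.volume 0 τ :=
              fun z _ => ((continuous_const.mul
                (continuous_pow (z.2.2.2.2.1 + z.2.2.2.1))).intervalIntegrable 0 τ)
            have e1 : Jp (Set.Ioo (-δ) δ ×ˢ T1) (Θ i) m 0 τ σ
                = ∫ α in (0:ℝ)..τ, ∑ z ∈ ((Finset.univ : Finset (Fin d)) ×ˢ Finset.range (m + 1)
                    ×ˢ Finset.range (m + 1) ×ˢ Finset.range (m + 1)
                    ×ˢ Finset.range (m + 1) ×ˢ Finset.range (m + 1)),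
                  ((m.choose z.2.1 : ℝ) * (z.2.1.choose z.2.2.1 : ℝ)
                      * ck z.2.2.1 z.2.2.2.2.1 z.2.2.2.2.2
                      * (pb z.1 (z.2.1 - z.2.2.1)).coeff z.2.2.2.1)
                    * (σ ^ z.2.2.2.2.2 * Polynomial.eval σ (pg z.1 (m - z.2.1)))
                    * α ^ (z.2.2.2.2.1 + z.2.2.2.1) := by
              apply intervalIntegral.integral_congr
              intro α hα
              exact hflat α (uIcc_sub_Icc' hτ hα) σ hσ
            rw [e1, intervalIntegral.integral_finset_sum hint]
            refine Finset.sum_congr rfl fun z _ => ?_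
            rw [intervalIntegral.integral_const_mul, integral_pow]
            rw [zero_pow (by omega), sub_zero]
            push_cast
            ring
          -- integrate in σ
          have hFpflat : ∀ τ ∈ Set.Icc (0:ℝ) 1,
              Fp (Set.Ioo (-δ) δ ×ˢ T1) (Θ i) m 0 τ
                = ∑ z ∈ ((Finset.univ : Finset (Fin d)) ×ˢ Finset.range (m + 1)
                    ×ˢ Finset.range (m + 1) ×ˢ Finset.range (m + 1)
                    ×ˢ Finset.range (m + 1) ×ˢ Finset.range (m + 1)),
                  (((m.choose z.2.1 : ℝ) * (z.2.1.choose z.2.2.1 : ℝ)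
                      * ck z.2.2.1 z.2.2.2.2.1 z.2.2.2.2.2
                      * (pb z.1 (z.2.1 - z.2.2.1)).coeff z.2.2.2.1)
                    * (∫ σ in (0:ℝ)..1, σ ^ z.2.2.2.2.2 * Polynomial.eval σ (pg z.1 (m - z.2.1)))
                    * (1 / (z.2.2.2.2.1 + z.2.2.2.1 + 1)))
                    * τ ^ (z.2.2.2.2.1 + z.2.2.2.1 + 1) := by
            intro τ hτ
            have h1m : (1:ℝ) ∈ Set.Icc (0:ℝ) 1 := ⟨zero_le_one, le_rfl⟩
            have hint : ∀ z ∈ ((Finset.univ : Finset (Fin d)) ×ˢ Finset.range (m + 1)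
                ×ˢ Finset.range (m + 1) ×ˢ Finset.range (m + 1)
                ×ˢ Finset.range (m + 1) ×ˢ Finset.range (m + 1)), IntervalIntegrable
                (fun σ => ((m.choose z.2.1 : ℝ) * (z.2.1.choose z.2.2.1 : ℝ)
                      * ck z.2.2.1 z.2.2.2.2.1 z.2.2.2.2.2
                      * (pb z.1 (z.2.1 - z.2.2.1)).coeff z.2.2.2.1)
                    * (σ ^ z.2.2.2.2.2 * Polynomial.eval σ (pg z.1 (m - z.2.1)))
                    * (τ ^ (z.2.2.2.2.1 + z.2.2.2.1 + 1) / (z.2.2.2.2.1 + z.2.2.2.1 + 1)))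
                  MeasureTheory.volume 0 1 := by
              intro z _
              apply Continuous.intervalIntegrable
              exact (continuous_const.mul ((continuous_pow _).mul
                (Polynomial.continuous _))).mul continuous_const
            have e1 : Fp (Set.Ioo (-δ) δ ×ˢ T1) (Θ i) m 0 τ
                = ∫ σ in (0:ℝ)..1, ∑ z ∈ ((Finset.univ : Finset (Fin d)) ×ˢ Finset.range (m + 1)
                    ×ˢ Finset.range (m + 1) ×ˢ Finset.range (m + 1)
                    ×ˢ Finset.range (m + 1) ×ˢ Finset.range (m + 1)),
                  ((m.choose z.2.1 : ℝ) * (z.2.1.choose z.2.2.1 : ℝ)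
                      * ck z.2.2.1 z.2.2.2.2.1 z.2.2.2.2.2
                      * (pb z.1 (z.2.1 - z.2.2.1)).coeff z.2.2.2.1)
                    * (σ ^ z.2.2.2.2.2 * Polynomial.eval σ (pg z.1 (m - z.2.1)))
                    * (τ ^ (z.2.2.2.2.1 + z.2.2.2.1 + 1) / (z.2.2.2.2.1 + z.2.2.2.1 + 1)) := by
              apply intervalIntegral.integral_congr
              intro σ hσ
              exact hJp τ hτ σ (uIcc_sub_Icc' h1m hσ)
            rw [e1, intervalIntegral.integral_finset_sum hint]
            refine Finset.sum_congr rfl fun z _ => ?_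
            rw [intervalIntegral.integral_mul_const, intervalIntegral.integral_const_mul]
            ring
          -- conclude : polynomial of degree ≤ m + 1
          refine (polyOn_sum _ _ fun z hz => ?_).congr (fun τ hτ => hFpflat τ hτ)
          by_cases hco : ((m.choose z.2.1 : ℝ) * (z.2.1.choose z.2.2.1 : ℝ)
              * ck z.2.2.1 z.2.2.2.2.1 z.2.2.2.2.2
              * (pb z.1 (z.2.1 - z.2.2.1)).coeff z.2.2.2.1) = 0
          · refine (polyOn_const (m + 1) 0).congr fun τ _ => ?_
            rw [hco]
            ring
          · -- extract the bounds from the nonvanishing of the coefficient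
            have hmem := hz
            simp only [Finset.mem_product, Finset.mem_univ, Finset.mem_range, true_and] at hmem
            obtain ⟨ha, hv, hp, hq, hu⟩ := hmem
            have hch : (z.2.1.choose z.2.2.1 : ℝ) ≠ 0 := fun h => hco (by rw [h]; ring)
            have hckne : ck z.2.2.1 z.2.2.2.2.1 z.2.2.2.2.2 ≠ 0 := fun h => hco (by rw [h]; ring)
            have hcoeffne : (pb z.1 (z.2.1 - z.2.2.1)).coeff z.2.2.2.1 ≠ 0 :=
              fun h => hco (by rw [h]; ring)
            have hva : z.2.2.1 ≤ z.2.1 := by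
              by_contra hlt
              exact hch (by rw [Nat.choose_eq_zero_of_lt (by omega)]; exact Nat.cast_zero)
            have hpv : z.2.2.2.2.1 ≤ z.2.2.1 := by
              by_contra hlt
              exact hckne (hck0 z.2.2.1 (by omega) _ _ (Or.inl (by omega)))
            have hudeg : z.2.2.2.1 ≤ z.2.1 - z.2.2.1 := by
              have h1 := Polynomial.le_natDegree_of_ne_zero hcoeffne
              have h2 := hpbdeg z.1 (z.2.1 - z.2.2.1) (by omega)
              omega
            have hbound : z.2.2.2.2.1 + z.2.2.2.1 + 1 ≤ m + 1 := by omega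
            exact polyOn_monomial _ hbound
        refine (hFpPoly.const_mul ((m : ℝ) + 1)).congr ?_
        intro τ hτ
        have hEq1 : (fun h => U h τ i) =ᶠ[nhds 0]
            (fun h => y₀ i + h * Fp (Set.Ioo (-δ) δ ×ˢ T1) (Θ i) 0 h τ) :=
          Filter.eventually_of_mem (hs.mem_nhds h0) (fun h hh => hEqn h hh τ hτ i)
        rw [hEq1.iteratedDeriv_eq, itD_const_add]
        have hlc := ((idseq_dseq (Set.Ioo (-δ) δ)).lconv
          (Fp_dseq hs (hΘ i) hτ)).iteratedDeriv_eq hs (m + 1) 0 h0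
        have h00 : lconv idseq (fun n h => Fp (Set.Ioo (-δ) δ ×ˢ T1) (Θ i) n h τ) 0
            = fun x => x * Fp (Set.Ioo (-δ) δ ×ˢ T1) (Θ i) 0 x τ := by
          funext x; simp [lconv, idseq]
        rw [show (fun h => h * Fp (Set.Ioo (-δ) δ ×ˢ T1) (Θ i) 0 h τ)
            = lconv idseq (fun n h => Fp (Set.Ioo (-δ) δ ×ˢ T1) (Θ i) n h τ) 0 from h00.symm,
          hlc]
        simp only [lconv]
        rw [Finset.sum_eq_single 1]
        · simp [idseq, Nat.choose_one_right]
        · intro b hb hb1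
          match b with
          | 0 => simp [idseq]
          | 1 => exact absurd rfl hb1
          | (b + 2) => simp [idseq]
        · intro hmem
          exact absurd (Finset.mem_range.mpr (by omega)) hmem
  -- conclusion
  intro m hmr i
  have hpoly := main m hmr i
  have hpoly2 : PolyOn m (fun τ =>
      (1 / (Nat.factorial m) : ℝ) * iteratedDeriv m (fun h => U h τ) 0 i) := by
    refine (hpoly.const_mul ((1 / (Nat.factorial m) : ℝ))).congr ?_
    intro τ hτ
    have hcc := iteratedDeriv_clm_comp (EuclideanSpace.proj (𝕜 := ℝ) i) hs (hUs τ hτ) m h0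
    have h2 : iteratedDeriv m (fun h => U h τ i) 0 = iteratedDeriv m (fun h => U h τ) 0 i := hcc
    rw [h2]
  obtain ⟨c, hc⟩ := hpoly2.exists_coeffs
  exact ⟨c, hc⟩
end

section
/- Let d ≥ 1, h ∈ ℝ, let H : ℝ^d → ℝ be continuously differentiable, and let B : ℝ^d → Matrix d d ℝ be such that B(y) is skew-symmetric for every y. Suppose y₀, y₁ ∈ ℝ^d satisfy y₁ = y₀ + h · B((y₀ + y₁)/2) · ∫₀¹ ∇H(y₀ + σ(y₁ − y₀)) dσ. Then H(y₁) = H(y₀). -/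
/-!
The averaged gradient `v = ∫₀¹ ∇H(y₀ + σ(y₁ - y₀)) dσ` is a discrete gradient: the fundamental
theorem of calculus along the segment gives `H y₁ - H y₀ = ⟪y₁ - y₀, v⟫`. The scheme says
`y₁ - y₀ = h B v`, and `⟪B v, v⟫ = 0` because `B` is skew-symmetric.
-/

open Matrix
open scoped InnerProductSpace

theorem Matrix.dotProduct_mulVec_self_eq_zero_of_transpose_eq_neg {n R : Type*} [Fintype n]
    [CommRing R] [IsAddTorsionFree R] {A : Matrix n n R} (hA : Aᵀ = -A) (v : n → R) :
    v ⬝ᵥ A *ᵥ v = 0 := by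
  have h := dotProduct_transpose_mulVec A v v
  rw [hA, neg_mulVec, dotProduct_neg] at h
  exact self_eq_neg.mp h.symm

theorem EuclideanSpace.inner_toLp_mulVec_self_eq_zero_of_transpose_eq_neg {n : Type*} [Fintype n]
    {A : Matrix n n ℝ} (hA : Aᵀ = -A) (x : EuclideanSpace ℝ n) :
    ⟪WithLp.toLp 2 (A *ᵥ x.ofLp), x⟫_ℝ = 0 := by
  rw [inner_eq_star_dotProduct, star_trivial, WithLp.ofLp_toLp]
  exact dotProduct_mulVec_self_eq_zero_of_transpose_eq_neg hA x.ofLp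

section Gradient

variable {E : Type*} [NormedAddCommGroup E] [InnerProductSpace ℝ E] [CompleteSpace E] {f : E → ℝ}

theorem ContDiff.continuous_gradient_s11 (hf : ContDiff ℝ 1 f) : Continuous (gradient f) :=
  (InnerProductSpace.toDual ℝ E).symm.continuous.comp (hf.continuous_fderiv one_ne_zero)

theorem HasGradientAt.hasDerivAt_comp_add_smul {x v g : E} {t : ℝ}
    (hf : HasGradientAt f g (x + t • v)) :
    HasDerivAt (fun s : ℝ => f (x + s • v)) ⟪v, g⟫_ℝ t := by
  have hline : HasDerivAt (fun s : ℝ => x + s • v) v t := by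
    simpa using ((hasDerivAt_id t).smul_const v).const_add x
  have h := hf.hasFDerivAt.comp_hasDerivAt t hline
  rwa [InnerProductSpace.toDual_apply_apply, real_inner_comm] at h

theorem ContDiff.sub_eq_inner_integral_gradient (hf : ContDiff ℝ 1 f) (x y : E) :
    f y - f x = ⟪y - x, (∫ σ in (0:ℝ)..1, gradient f (x + σ • (y - x)))⟫_ℝ := by
  have hcont : Continuous fun σ : ℝ => gradient f (x + σ • (y - x)) :=
    hf.continuous_gradient_s11.comp (by fun_prop)
  have hderiv (σ : ℝ) : HasDerivAt (fun s : ℝ => f (x + s • (y - x)))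
      ⟪y - x, gradient f (x + σ • (y - x))⟫_ℝ σ :=
    ((hf.differentiable one_ne_zero) _).hasGradientAt.hasDerivAt_comp_add_smul
  have hftc := intervalIntegral.integral_eq_sub_of_hasDerivAt (fun σ _ => hderiv σ)
    ((continuous_const.inner hcont).intervalIntegrable 0 1)
  have hpull := (innerSL ℝ (y - x)).intervalIntegral_comp_comm
    (hcont.intervalIntegrable (μ := MeasureTheory.volume) 0 1)
  simp only [innerSL_apply_apply] at hpull
  rw [hpull, one_smul, zero_smul, add_zero, add_sub_cancel] at hftc
  exact hftc.symm

end Gradient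

theorem cohen_hairer_energy_preservation_general
    (d : ℕ) (h : ℝ)
    (H : EuclideanSpace ℝ (Fin d) → ℝ) (hH : ContDiff ℝ 1 H)
    (B : EuclideanSpace ℝ (Fin d) → Matrix (Fin d) (Fin d) ℝ)
    (hB : ∀ y, (B y)ᵀ = -(B y))
    (y₀ y₁ : EuclideanSpace ℝ (Fin d))
    (hy : y₁ = y₀ + h • (WithLp.equiv 2 (Fin d → ℝ)).symm
      ((B ((2:ℝ)⁻¹ • (y₀ + y₁))).mulVec
        (fun j => (∫ σ in (0:ℝ)..1, gradient H (y₀ + σ • (y₁ - y₀))) j))) :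
    H y₁ = H y₀ := by
  rw [← sub_eq_zero, hH.sub_eq_inner_integral_gradient y₀ y₁]
  -- abstracting `v` keeps the rewrite with `hy` from reaching inside the integrand
  set v := ∫ σ in (0:ℝ)..1, gradient H (y₀ + σ • (y₁ - y₀))
  rw [sub_eq_of_eq_add' hy, inner_smul_left, WithLp.equiv_symm_apply,
    EuclideanSpace.inner_toLp_mulVec_self_eq_zero_of_transpose_eq_neg (hB _), mul_zero]

/-- **Energy preservation of the Cohen–Hairer scheme (Example 1, `r = 1`).**
If `y₁ = y₀ + h B((y₀+y₁)/2) ∫₀¹ ∇H(y₀ + σ(y₁ − y₀)) dσ` with `B(y)` skew-symmetric,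
then `H(y₁) = H(y₀)`. -/
theorem cohen_hairer_energy_preservation
    (d : ℕ) (hd : 1 ≤ d) (h : ℝ)
    (H : EuclideanSpace ℝ (Fin d) → ℝ) (hH : ContDiff ℝ 1 H)
    (B : EuclideanSpace ℝ (Fin d) → Matrix (Fin d) (Fin d) ℝ)
    (hB : ∀ y, (B y)ᵀ = -(B y))
    (y₀ y₁ : EuclideanSpace ℝ (Fin d))
    (hy : y₁ = y₀ + h • (WithLp.equiv 2 (Fin d → ℝ)).symm
      ((B ((2:ℝ)⁻¹ • (y₀ + y₁))).mulVec
        (fun j => (∫ σ in (0:ℝ)..1, gradient H (y₀ + σ • (y₁ - y₀))) j))) :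
    H y₁ = H y₀ :=
  cohen_hairer_energy_preservation_general d h H hH B hB y₀ y₁ hy
end
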